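/- arXiv:2409.13164 — 4 statements merged into one kernel-verified Lean document; each statement's English description precedes it below -/
import Mathlib

section
/- If 𝔼[W log W] < log b and 𝔼[W^t] < ∞ for all t > 0, then 0 < D_F(W,b) < 1. -/
open MeasureTheory ProbabilityTheory Filter Topology
open scoped ENNReal NNReal

noncomputable section

namespace MCCM

/-- Left endpoint of the `b`-adic interval indexed by the word `u` of length `n`. -/
def adicLeft (b n : ℕ) (u : Fin n → Fin b) : ℝ :=
  ∑ k : Fin n, (u k : ℝ) / (b : ℝ) ^ ((k : ℕ) + 1)

/-- The `b`-adic interval `I_u` indexed by the word `u`. -/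
def adicI (b n : ℕ) (u : Fin n → Fin b) : Set ℝ :=
  Set.Ico (adicLeft b n u) (adicLeft b n u + 1 / (b : ℝ) ^ n)

/-- The prefix of length `j` of the word `u`, as a list. -/
def wordPrefix (b n : ℕ) (u : Fin n → Fin b) (j : ℕ) : List (Fin b) :=
  (List.ofFn u).take j

/-- The complex exponential `e^{-2πi t ζ}`. -/
def eker (ζ t : ℝ) : ℂ :=
  Complex.exp ((-(2 * Real.pi * t * ζ) : ℝ) * Complex.I)

/-- Fourier transform of a measure on `ℝ`. -/
def ft (μ : Measure ℝ) (ζ : ℝ) : ℂ := ∫ t, eker ζ t ∂μ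

/-- The Fourier dimension of a measure on `ℝ`. -/
def fourierDim (μ : Measure ℝ) : ℝ :=
  sSup {D : ℝ | D ∈ Set.Icc (0 : ℝ) 1 ∧
    ∃ c : ℝ, 0 < c ∧ ∀ ζ : ℝ, ‖ft μ ζ‖ ≤ c * (1 + |ζ|) ^ (-D / 2)}

variable {Ω : Type*} [MeasureSpace Ω]

/-- The product of the weights over the prefixes `u|_j`, `j = 0, …, n`. -/
def cascadeWeight (b : ℕ) (WF : List (Fin b) → Ω → ℝ) (n : ℕ) (u : Fin n → Fin b) (ω : Ω) : ℝ :=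
  ∏ j ∈ Finset.range (n + 1), WF (wordPrefix b n u j) ω

/-- The random cascade measure `μ_n`. -/
def cascadeMeasure (b : ℕ) (WF : List (Fin b) → Ω → ℝ) (n : ℕ) (ω : Ω) : Measure ℝ :=
  volume.withDensity fun t => ENNReal.ofReal
    (∑ u : Fin n → Fin b, cascadeWeight b WF n u ω * (adicI b n u).indicator (fun _ => (1 : ℝ)) t)

/-- `W` is a random cascade weight: nonnegative, mean one, non-constant. -/
structure IsWeight (b : ℕ) (W : Ω → ℝ) : Prop where
  two_le : 2 ≤ b
  meas : Measurable W
  nonneg : ∀ ω, 0 ≤ W ω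
  integrable : Integrable W
  mean_one : (∫ ω, W ω) = 1
  nonconst : ∀ c : ℝ, ¬ (∀ᵐ ω : Ω, W ω = c)

/-- `WF` is a family of i.i.d. copies of `W` indexed by the nonempty words, with `WF ∅ ≡ 1`. -/
structure IsCopies (b : ℕ) (W : Ω → ℝ) (WF : List (Fin b) → Ω → ℝ) : Prop where
  root : ∀ ω, WF [] ω = 1
  meas : ∀ u, Measurable (WF u)
  nonneg : ∀ u ω, 0 ≤ WF u ω
  ident : ∀ u : List (Fin b), u ≠ [] → Measure.map (WF u) ℙ = Measure.map W ℙ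
  indep : iIndepFun
    (fun u : {u : List (Fin b) // u ≠ []} => WF u.1) ℙ

/-- `μlim` is a random finite measure on `[0,1]` which is almost surely
the weak limit of the cascade measures `μ_n`. -/
structure IsCascadeLimit (b : ℕ) (WF : List (Fin b) → Ω → ℝ) (μlim : Ω → Measure ℝ) : Prop where
  finite : ∀ ω, IsFiniteMeasure (μlim ω)
  support : ∀ ω, μlim ω (Set.Icc (0 : ℝ) 1)ᶜ = 0
  weak : ∀ᵐ ω : Ω, ∀ f : ℝ → ℝ, Continuous f →
    Tendsto (fun n => ∫ t, f t ∂ (cascadeMeasure b WF n ω)) atTop (𝓝 (∫ t, f t ∂ (μlim ω)))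

/-- `𝔼[W²]`. -/
def eW2 (W : Ω → ℝ) : ℝ := ∫ ω, (W ω) ^ 2

/-- `𝔼[W⁽²⁾ log W⁽²⁾]` where `W⁽²⁾ = W²/𝔼[W²]`. -/
def sqLogMoment (W : Ω → ℝ) : ℝ :=
  ∫ ω, ((W ω) ^ 2 / eW2 W) * Real.log ((W ω) ^ 2 / eW2 W)

open Classical in
/-- The quantity `D_F(W, b)`. -/
def DF (b : ℕ) (W : Ω → ℝ) : ℝ :=
  if sqLogMoment W ≤ Real.log b then 1 - Real.log (eW2 W) / Real.log b
  else 1 - ⨅ t : Set.Icc (1/2 : ℝ) 1,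
    Real.log (∫ ω, (b : ℝ) ^ (1 - (t : ℝ)) * (W ω) ^ (2 * (t : ℝ))) / ((t : ℝ) * Real.log b)

/-- `log W` is non-lattice. -/
def NonLattice (W : Ω → ℝ) : Prop :=
  ¬ ∃ a d : ℝ, ∀ᵐ ω : Ω, 0 < W ω → ∃ k : ℤ, Real.log (W ω) = a + d * k

end MCCM

/-!
Write `M s = 𝔼[W ^ s]`. Since `M 1 = 1` and `M' 1 = 𝔼[W log W] < log b`, some `s ∈ (1, 2]` has
`log M s < (s - 1) log b`. The function `log M` is convex, and its tangent line at `2` reads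
`log M s ≥ log 𝔼[W²] + (s - 2) 𝔼[W² log W] / 𝔼[W²]`. In the first case of `D_F` the case
condition and this tangent line at that `s` give `log 𝔼[W²] < log b`, while `𝔼[W²] > 1` as `W`
is not constant. In the second case `t = s / 2` shows that the infimum is `< 1`, and the bounds
`M ≥ 1` on `[1, 2]` and the tangent line at `2` bound the ratio away from `0` uniformly in `t`.
-/

open Real

lemma sub_mul_rpow_mul_log_le {x c p s : ℝ} (hx : 0 ≤ x) (hc : 0 < c) (hp : 0 < p) :
    (s - p) * (x ^ p * log x) ≤ x ^ p * log c + x ^ s / c - x ^ p := by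
  rcases hx.eq_or_lt with rfl | hx
  · simp only [zero_rpow hp.ne', log_zero, mul_zero, zero_mul, sub_zero, zero_add]
    exact div_nonneg (rpow_nonneg le_rfl s) hc.le
  have hlog := log_le_sub_one_of_pos (div_pos (rpow_pos_of_pos hx (s - p)) hc)
  rw [log_div (rpow_pos_of_pos hx _).ne' hc.ne', log_rpow hx] at hlog
  calc (s - p) * (x ^ p * log x) = x ^ p * ((s - p) * log x - log c) + x ^ p * log c := by ring
    _ ≤ x ^ p * (x ^ (s - p) / c - 1) + x ^ p * log c := by gcongr
    _ = x ^ p * log c + x ^ p * x ^ (s - p) / c - x ^ p := by ring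
    _ = _ := by rw [← rpow_add hx, add_sub_cancel]

lemma abs_rpow_mul_log_le {x p : ℝ} (hx : 0 ≤ x) (hp : 0 < p) :
    |x ^ p * log x| ≤ x ^ (p + 1) + p⁻¹ := by
  rcases hx.eq_or_lt with rfl | hx
  · simp only [log_zero, mul_zero, abs_zero]; positivity
  rcases le_or_gt x 1 with hx1 | hx1
  · have h := abs_log_mul_self_lt (x ^ p) (rpow_pos_of_pos hx p) (rpow_le_one hx.le hx1 hp.le)
    rw [log_rpow hx, mul_assoc, abs_mul, abs_of_pos hp, mul_comm (log x)] at h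
    have : |x ^ p * log x| ≤ p⁻¹ := by
      calc |x ^ p * log x| = p⁻¹ * (p * |x ^ p * log x|) := by field_simp
        _ ≤ p⁻¹ * 1 := by gcongr
        _ = p⁻¹ := mul_one _
    linarith [rpow_nonneg hx.le (p + 1)]
  · have hlog : log x ≤ x := (log_le_sub_one_of_pos hx).trans (by linarith)
    rw [abs_of_nonneg (mul_nonneg (rpow_nonneg hx.le p) (log_nonneg hx1.le)), rpow_add_one hx.ne']
    have := mul_le_mul_of_nonneg_left hlog (rpow_nonneg hx.le p)
    linarith [inv_pos.2 hp]

lemma rpow_slope_mem_Icc {x s : ℝ} (hx : 0 ≤ x) (hs1 : 1 < s) (hs2 : s ≤ 2) :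
    (x ^ s - x) / (s - 1) ∈ Set.Icc (x * log x) (x ^ 2 - x) := by
  have hr : 0 < s - 1 := by linarith
  have hsplit : x ^ s = x * x ^ (s - 1) := by
    rw [← rpow_one_add' hx (by linarith), add_sub_cancel]
  rw [Set.mem_Icc, le_div_iff₀ hr, div_le_iff₀ hr, hsplit]
  constructor
  · rcases hx.eq_or_lt with rfl | hx
    · simp
    have h := add_one_le_exp (log x * (s - 1))
    rw [← rpow_def_of_pos hx] at h
    nlinarith [mul_le_mul_of_nonneg_left h hx.le]
  · have h := rpow_one_add_le_one_add_mul_self (by linarith : -1 ≤ x - 1) hr.le (by linarith)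
    rw [add_sub_cancel] at h
    nlinarith [mul_le_mul_of_nonneg_left h hx]

lemma iInf_rate_mem_Ioo {L ℓ K t₀ : ℝ} {ψ : ℝ → ℝ} (hL : 0 < L) (hℓ : 0 < ℓ) (hK : 0 ≤ K)
    (hψ0 : ∀ t ∈ Set.Icc (1 / 2 : ℝ) 1, 0 ≤ ψ t)
    (htan : ∀ t ∈ Set.Icc (1 / 2 : ℝ) 1, ℓ - 2 * (1 - t) * K ≤ ψ t)
    (ht₀ : t₀ ∈ Set.Icc (1 / 2 : ℝ) 1) (hψt₀ : ψ t₀ < (2 * t₀ - 1) * L) :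
    0 < ⨅ t : Set.Icc (1 / 2 : ℝ) 1, ((1 - t) * L + ψ t) / (t * L) ∧
      ⨅ t : Set.Icc (1 / 2 : ℝ) 1, ((1 - t) * L + ψ t) / (t * L) < 1 := by
  -- weighting the bounds `0 ≤ ψ t` and `ℓ - 2 (1 - t) K ≤ ψ t` by `2 K` and `L` cancels `t`
  have hlower : ∀ t : Set.Icc (1 / 2 : ℝ) 1, ℓ / (L + 2 * K) ≤ ((1 - t) * L + ψ t) / (t * L) := by
    rintro ⟨t, ht⟩
    have h0 := hψ0 t ht
    have h1 := htan t ht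
    obtain ⟨ht1, ht2⟩ := ht
    have hh : L * ℓ ≤ (L + 2 * K) * ((1 - t) * L + ψ t) := by
      nlinarith [mul_le_mul_of_nonneg_left h1 hL.le, mul_nonneg hK h0,
        mul_nonneg (mul_nonneg hL.le hL.le) (sub_nonneg.2 ht2), mul_nonneg hK hL.le]
    dsimp only
    rw [div_le_div_iff₀ (by positivity) (by positivity)]
    nlinarith [mul_nonneg (mul_nonneg hℓ.le hL.le) (sub_nonneg.2 ht2)]
  have : Nonempty (Set.Icc (1 / 2 : ℝ) 1) := ⟨⟨t₀, ht₀⟩⟩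
  have hbdd : BddBelow (Set.range fun t : Set.Icc (1 / 2 : ℝ) 1 => ((1 - t) * L + ψ t) / (t * L)) :=
    ⟨_, Set.forall_mem_range.2 hlower⟩
  refine ⟨(by positivity : 0 < ℓ / (L + 2 * K)).trans_le (le_ciInf hlower),
    (ciInf_le hbdd ⟨t₀, ht₀⟩).trans_lt ?_⟩
  rw [div_lt_one (mul_pos (by linarith [ht₀.1]) hL)]
  linarith

section Moments

variable {Ω : Type*} [MeasurableSpace Ω] {μ : Measure Ω} {W : Ω → ℝ}

lemma one_lt_integral_sq [IsProbabilityMeasure μ] (hW : AEMeasurable W μ)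
    (hW2 : Integrable (fun ω => W ω ^ 2) μ) (hmean : ∫ ω, W ω ∂μ = 1)
    (hnc : ¬ ∀ᵐ ω ∂μ, W ω = 1) : 1 < ∫ ω, W ω ^ 2 ∂μ := by
  have hL2 : MemLp W 2 μ := (memLp_two_iff_integrable_sq hW.aestronglyMeasurable).2 hW2
  have hvar : 0 < variance W μ := (variance_nonneg W μ).lt_of_ne' fun h =>
    hnc (by simpa [hmean] using ae_eq_integral_of_variance_eq_zero hL2 h)
  rw [variance_eq_sub hL2] at hvar
  simp only [Pi.pow_apply, hmean] at hvar
  linarith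

lemma integral_rpow_pos (hW0 : ∀ ω, 0 ≤ W ω) (hWi : Integrable W μ) (hmean : 0 < ∫ ω, W ω ∂μ)
    {s : ℝ} (hs : s ≠ 0) (hWs : Integrable (fun ω => W ω ^ s) μ) : 0 < ∫ ω, W ω ^ s ∂μ := by
  rw [integral_pos_iff_support_of_nonneg hW0 hWi] at hmean
  rw [integral_pos_iff_support_of_nonneg (fun ω => rpow_nonneg (hW0 ω) s) hWs]
  have hsupp : Function.support (fun ω => W ω ^ s) = Function.support W := by
    ext ω
    simp only [Function.mem_support, ne_eq, rpow_eq_zero (hW0 ω) hs]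
  rwa [hsupp]

lemma one_le_integral_rpow [IsProbabilityMeasure μ] (hW0 : ∀ ω, 0 ≤ W ω) (hWi : Integrable W μ)
    (hmean : ∫ ω, W ω ∂μ = 1) {s : ℝ} (hs : 1 ≤ s) (hWs : Integrable (fun ω => W ω ^ s) μ) :
    1 ≤ ∫ ω, W ω ^ s ∂μ := by
  have := (convexOn_rpow hs).map_integral_le
    ((continuous_rpow_const (by linarith)).continuousOn) isClosed_Ici
    (ae_of_all _ hW0) hWi hWs
  rwa [hmean, one_rpow] at this

lemma integrable_rpow_mul_log [IsFiniteMeasure μ] (hW0 : ∀ ω, 0 ≤ W ω) (hW : AEMeasurable W μ)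
    {p : ℝ} (hp : 0 < p) (hWp : Integrable (fun ω => W ω ^ (p + 1)) μ) :
    Integrable (fun ω => W ω ^ p * log (W ω)) μ :=
  (hWp.add (integrable_const p⁻¹)).mono'
    ((hW.pow_const p).mul (measurable_log.comp_aemeasurable hW)).aestronglyMeasurable
    (ae_of_all _ fun ω => abs_rpow_mul_log_le (hW0 ω) hp)

-- the tangent line at `p` of the convex function `s ↦ log ∫ W ^ s`
lemma mul_integral_rpow_mul_log_le (hW0 : ∀ ω, 0 ≤ W ω) {p s : ℝ} (hp : 0 < p)
    (hWp : Integrable (fun ω => W ω ^ p) μ) (hWs : Integrable (fun ω => W ω ^ s) μ)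
    (hlog : Integrable (fun ω => W ω ^ p * log (W ω)) μ)
    (hMp : 0 < ∫ ω, W ω ^ p ∂μ) (hMs : 0 < ∫ ω, W ω ^ s ∂μ) :
    (s - p) * ∫ ω, W ω ^ p * log (W ω) ∂μ ≤
      (∫ ω, W ω ^ p ∂μ) * (log (∫ ω, W ω ^ s ∂μ) - log (∫ ω, W ω ^ p ∂μ)) := by
  set c := (∫ ω, W ω ^ s ∂μ) / ∫ ω, W ω ^ p ∂μ
  have hc : 0 < c := div_pos hMs hMp
  have hint : Integrable (fun ω => W ω ^ p * log c + W ω ^ s / c) μ :=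
    (hWp.mul_const _).add (hWs.div_const c)
  have h : (s - p) * ∫ ω, W ω ^ p * log (W ω) ∂μ ≤
      ∫ ω, (W ω ^ p * log c + W ω ^ s / c - W ω ^ p) ∂μ := by
    rw [← integral_const_mul]
    exact integral_mono (hlog.const_mul (s - p))
      (hint.sub hWp)
      fun ω => sub_mul_rpow_mul_log_le (hW0 ω) hc hp
  rw [integral_sub hint hWp,
    integral_add (hWp.mul_const _) (hWs.div_const c), integral_mul_const, integral_div,
    div_div_cancel₀ hMs.ne', log_div hMs.ne' hMp.ne'] at h
  linarith

lemma tendsto_integral_rpow_slope (hW0 : ∀ ω, 0 ≤ W ω) (hW : AEMeasurable W μ)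
    (hW2 : Integrable (fun ω => W ω ^ 2) μ) (hWi : Integrable W μ)
    (hlog : Integrable (fun ω => W ω * log (W ω)) μ) :
    Tendsto (fun s => ∫ ω, (W ω ^ s - W ω) / (s - 1) ∂μ) (𝓝[>] 1)
      (𝓝 (∫ ω, W ω * log (W ω) ∂μ)) := by
  refine tendsto_integral_filter_of_dominated_convergence
    (fun ω => |W ω * log (W ω)| + |W ω ^ 2 - W ω|)
    (Eventually.of_forall fun s => (((hW.pow_const s).sub hW).div_const _).aestronglyMeasurable)
    ?_ (hlog.abs.add (hW2.sub hWi).abs) (ae_of_all _ fun ω => ?_)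
  · filter_upwards [Ioc_mem_nhdsGT one_lt_two] with s hs
    refine ae_of_all _ fun ω => ?_
    have h := rpow_slope_mem_Icc (hW0 ω) hs.1 hs.2
    rw [Real.norm_eq_abs]
    exact (abs_le_max_abs_abs h.1 h.2).trans (max_le_add_of_nonneg (abs_nonneg _) (abs_nonneg _))
  rcases (hW0 ω).eq_or_lt with h0 | hpos
  · rw [← h0, zero_mul]
    refine tendsto_const_nhds.congr' ?_
    filter_upwards [self_mem_nhdsWithin] with s hs
    rw [zero_rpow (ne_of_gt (zero_lt_one.trans hs))]
    simp
  · have h := hasDerivAt_iff_tendsto_slope.1 (hasStrictDerivAt_const_rpow hpos 1).hasDerivAt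
    rw [rpow_one] at h
    refine (h.mono_left (nhdsGT_le_nhdsNE 1)).congr fun s => ?_
    rw [slope_def_field, rpow_one]

lemma exists_log_integral_rpow_lt [IsFiniteMeasure μ] (hW0 : ∀ ω, 0 ≤ W ω)
    (hW : AEMeasurable W μ) (hmean : ∫ ω, W ω ∂μ = 1)
    (hmom : ∀ t : ℝ, 0 < t → Integrable (fun ω => W ω ^ t) μ) {L : ℝ}
    (hL : ∫ ω, W ω * log (W ω) ∂μ < L) :
    ∃ s, 1 < s ∧ s ≤ 2 ∧ log (∫ ω, W ω ^ s ∂μ) < (s - 1) * L := by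
  have hWi : Integrable W μ := by simpa only [rpow_one] using hmom 1 one_pos
  have hW2 : Integrable (fun ω => W ω ^ 2) μ := by simpa only [rpow_two] using hmom 2 two_pos
  have hlog : Integrable (fun ω => W ω * log (W ω)) μ := by
    simpa only [rpow_one] using integrable_rpow_mul_log hW0 hW one_pos (hmom _ (by norm_num))
  obtain ⟨s, hslope, hs⟩ := ((tendsto_integral_rpow_slope hW0 hW hW2 hWi hlog).eventually
    (gt_mem_nhds hL)).and (Ioc_mem_nhdsGT one_lt_two) |>.exists
  have hs0 : 0 < s := by linarith [hs.1]
  have hr : 0 < s - 1 := by linarith [hs.1]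
  rw [integral_div, integral_sub (hmom s hs0) hWi, hmean, div_lt_iff₀ hr] at hslope
  refine ⟨s, hs.1, hs.2, ?_⟩
  have := log_le_sub_one_of_pos (integral_rpow_pos hW0 hWi (by rw [hmean]; exact one_pos)
    hs0.ne' (hmom s hs0))
  linarith

lemma log_integral_sq_add_le [IsFiniteMeasure μ] (hW0 : ∀ ω, 0 ≤ W ω) (hW : AEMeasurable W μ)
    (hmean : 0 < ∫ ω, W ω ∂μ) (hmom : ∀ t : ℝ, 0 < t → Integrable (fun ω => W ω ^ t) μ)
    {s : ℝ} (hs : 0 < s) :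
    log (∫ ω, W ω ^ 2 ∂μ) + (s - 2) * ((∫ ω, W ω ^ 2 * log (W ω) ∂μ) / ∫ ω, W ω ^ 2 ∂μ) ≤
      log (∫ ω, W ω ^ s ∂μ) := by
  have hWi : Integrable W μ := by simpa only [rpow_one] using hmom 1 one_pos
  have hM2 := integral_rpow_pos hW0 hWi hmean two_ne_zero (hmom 2 two_pos)
  have h := mul_integral_rpow_mul_log_le hW0 two_pos (hmom 2 two_pos) (hmom s hs)
    (integrable_rpow_mul_log hW0 hW two_pos (hmom _ (by norm_num))) hM2
    (integral_rpow_pos hW0 hWi hmean hs.ne' (hmom s hs))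
  simp only [rpow_two] at h hM2
  rw [mul_div_assoc', ← le_sub_iff_add_le', div_le_iff₀ hM2]
  linarith

end Moments

namespace MCCM

section

variable {Ω : Type*} [MeasureSpace Ω]

def dfRate (b : ℕ) (W : Ω → ℝ) (t : ℝ) : ℝ :=
  log (∫ ω, (b : ℝ) ^ (1 - t) * W ω ^ (2 * t)) / (t * log b)

lemma DF_of_lt {b : ℕ} {W : Ω → ℝ} (h : log b < sqLogMoment W) :
    DF b W = 1 - ⨅ t : Set.Icc (1 / 2 : ℝ) 1, dfRate b W t := by
  rw [DF, if_neg h.not_ge]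
  rfl

lemma dfRate_eq {b : ℕ} (hb : 0 < b) {W : Ω → ℝ} {t : ℝ} (hM : 0 < ∫ ω, W ω ^ (2 * t)) :
    dfRate b W t = ((1 - t) * log b + log (∫ ω, W ω ^ (2 * t))) / (t * log b) := by
  rw [dfRate, integral_const_mul, log_mul (by positivity) hM.ne', log_rpow (by positivity)]

lemma sqLogMoment_eq {W : Ω → ℝ} (hm : 0 < eW2 W) (hW2 : Integrable fun ω => W ω ^ 2)
    (hA : Integrable fun ω => W ω ^ 2 * log (W ω)) :
    sqLogMoment W = 2 * ((∫ ω, W ω ^ 2 * log (W ω)) / eW2 W) - log (eW2 W) := by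
  have hpt : ∀ ω, W ω ^ 2 / eW2 W * log (W ω ^ 2 / eW2 W) =
      2 / eW2 W * (W ω ^ 2 * log (W ω)) - log (eW2 W) / eW2 W * W ω ^ 2 := fun ω => by
    rcases eq_or_ne (W ω) 0 with h0 | h0
    · simp [h0]
    · rw [log_div (pow_ne_zero 2 h0) hm.ne', log_pow]
      ring
  rw [sqLogMoment, integral_congr_ae (ae_of_all _ hpt), integral_sub (hA.const_mul _)
    (hW2.const_mul _), integral_const_mul, integral_const_mul, ← eW2]
  field_simp

lemma log_eW2_lt_of_sqLogMoment_le [IsFiniteMeasure (ℙ : Measure Ω)] {W : Ω → ℝ}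
    (hW0 : ∀ ω, 0 ≤ W ω) (hW : AEMeasurable W) (hmean : ∫ ω, W ω = 1)
    (hmom : ∀ t : ℝ, 0 < t → Integrable fun ω => W ω ^ t) {L : ℝ}
    (hnd : ∫ ω, W ω * log (W ω) < L) (hcase : sqLogMoment W ≤ L) : log (eW2 W) < L := by
  have hWi : Integrable W := by simpa only [rpow_one] using hmom 1 one_pos
  have hW2 : Integrable fun ω => W ω ^ 2 := by simpa only [rpow_two] using hmom 2 two_pos
  have hm : 0 < eW2 W := by
    simpa only [eW2, rpow_two] using
      integral_rpow_pos hW0 hWi (by rw [hmean]; exact one_pos) two_ne_zero (hmom 2 two_pos)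
  have hA : Integrable fun ω => W ω ^ 2 * log (W ω) := by
    simpa only [rpow_two] using integrable_rpow_mul_log hW0 hW two_pos (hmom _ (by norm_num))
  rw [sqLogMoment_eq hm hW2 hA] at hcase
  obtain ⟨s, hs1, hs2, hMs⟩ := exists_log_integral_rpow_lt hW0 hW hmean hmom hnd
  have htan : log (eW2 W) + (s - 2) * ((∫ ω, W ω ^ 2 * log (W ω)) / eW2 W) ≤
      log (∫ ω, W ω ^ s) :=
    log_integral_sq_add_le hW0 hW (by rw [hmean]; exact one_pos) hmom (by linarith)
  nlinarith

lemma iInf_dfRate_mem_Ioo [IsProbabilityMeasure (ℙ : Measure Ω)] {b : ℕ} (hb : 1 < b)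
    {W : Ω → ℝ} (hW0 : ∀ ω, 0 ≤ W ω) (hW : AEMeasurable W) (hmean : ∫ ω, W ω = 1)
    (hmom : ∀ t : ℝ, 0 < t → Integrable fun ω => W ω ^ t) (hm : 1 < eW2 W)
    (hnd : ∫ ω, W ω * log (W ω) < log b) :
    0 < ⨅ t : Set.Icc (1 / 2 : ℝ) 1, dfRate b W t ∧
      ⨅ t : Set.Icc (1 / 2 : ℝ) 1, dfRate b W t < 1 := by
  have hWi : Integrable W := by simpa only [rpow_one] using hmom 1 one_pos
  have hmean_pos : 0 < ∫ ω, W ω := by rw [hmean]; exact one_pos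
  set K := (∫ ω, W ω ^ 2 * log (W ω)) / eW2 W
  have htan : ∀ s, 0 < s → log (eW2 W) + (s - 2) * K ≤ log (∫ ω, W ω ^ s) := fun s hs =>
    log_integral_sq_add_le hW0 hW hmean_pos hmom hs
  have hK : log (eW2 W) ≤ K := by
    have := htan 1 one_pos
    simp only [rpow_one, hmean, log_one] at this
    linarith
  obtain ⟨s, hs1, hs2, hMs⟩ := exists_log_integral_rpow_lt hW0 hW hmean hmom hnd
  have hrate : ⨅ t : Set.Icc (1 / 2 : ℝ) 1, dfRate b W t =
      ⨅ t : Set.Icc (1 / 2 : ℝ) 1, ((1 - t) * log b + log (∫ ω, W ω ^ (2 * (t : ℝ)))) /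
        (t * log b) := iInf_congr fun t => dfRate_eq (by omega)
    (integral_rpow_pos hW0 hWi hmean_pos (by linarith [t.2.1]) (hmom _ (by linarith [t.2.1])))
  rw [hrate]
  refine iInf_rate_mem_Ioo (log_pos (by exact_mod_cast hb)) (log_pos hm)
    (hK.trans' (log_pos hm).le) (fun t ht => log_nonneg (one_le_integral_rpow hW0 hWi hmean
      (by linarith [ht.1]) (hmom _ (by linarith [ht.1]))))
    (fun t ht => by linarith [htan (2 * t) (by linarith [ht.1])])
    (t₀ := s / 2) ⟨by linarith, by linarith⟩ ?_
  rw [mul_div_cancel₀ s two_ne_zero]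
  linarith

end

/-- If `𝔼[W log W] < log b` and `𝔼[W^t] < ∞` for all `t > 0`, then
`0 < D_F(W,b) < 1`. -/
theorem statement13 {Ω : Type*} [MeasureSpace Ω] [IsProbabilityMeasure (ℙ : Measure Ω)]
    (b : ℕ) (W : Ω → ℝ) (hW : IsWeight b W)
    (hmom : ∀ t : ℝ, 0 < t → Integrable fun ω => W ω ^ t)
    (hnd : (∫ ω, W ω * Real.log (W ω)) < Real.log b) :
    0 < DF b W ∧ DF b W < 1 := by
  obtain ⟨hb2, hWm, hW0, -, hmean, hnc⟩ := hW
  have hb : 1 < b := hb2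
  have hL : 0 < log b := log_pos (by exact_mod_cast hb)
  have hm : 1 < eW2 W := one_lt_integral_sq hWm.aemeasurable
    (by simpa only [rpow_two] using hmom 2 two_pos) hmean (hnc 1)
  by_cases hcase : sqLogMoment W ≤ log b
  · have hlt := log_eW2_lt_of_sqLogMoment_le hW0 hWm.aemeasurable hmean hmom hnd hcase
    rw [DF, if_pos hcase]
    constructor
    · linarith [(div_lt_one hL).2 hlt]
    · linarith [div_pos (log_pos hm) hL]
  · obtain ⟨hpos, hlt⟩ := iInf_dfRate_mem_Ioo hb hW0 hWm.aemeasurable hmean hmom hm hnd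
    rw [DF_of_lt (not_le.1 hcase)]
    constructor <;> linarith

end MCCM
end
end

section
/- Let η and ψ be as given. Then: (i) ψ is infinitely differentiable on (0,∞); (ii) ψ(1) = 0 and ψ′(1) = 0; (iii) ψ is strictly decreasing on (0,1] and strictly increasing on [1,∞), so in particular ψ(t) ≥ 0 for all t > 0; (iv) ψ is strictly convex on (0,∞); (v) for every β > 0, the weight W = η^β/𝔼[η^β] satisfies: 𝔼[W log W] < log b if and only if 0 < β < 1; 𝔼[W log W] = log b if and only if β = 1; and 𝔼[W log W] > log b if and only if β > 1. -/
open MeasureTheory ProbabilityTheory Filter Topology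
open scoped ENNReal NNReal

noncomputable section

namespace MCCM

variable {Ω : Type*} [MeasureSpace Ω]

/-- `η` is a boundary-case environment: `η ≥ 0`, `𝔼[η] = 1/b`, `𝔼[η log η] = 0`,
`ℙ(η > 1) > 0` and `𝔼[η^t] < ∞` for all `t > 0`  (`η = e^{−ξ}` in the paper's notation). -/
structure IsBoundaryEnv (b : ℕ) (η : Ω → ℝ) : Prop where
  two_le : 2 ≤ b
  meas : Measurable η
  nonneg : ∀ ω, 0 ≤ η ω
  mean : (∫ ω, η ω) = 1 / b
  loglin : (∫ ω, η ω * Real.log (η ω)) = 0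
  pos : 0 < ℙ {ω : Ω | 1 < η ω}
  mom : ∀ t : ℝ, 0 < t → Integrable fun ω => η ω ^ t

/-- `ψ(t) = log 𝔼[b η^t]`. -/
def psiFun (b : ℕ) (η : Ω → ℝ) (t : ℝ) : ℝ :=
  Real.log (∫ ω, (b : ℝ) * η ω ^ t)

/-- The Biggins–Kyprianou weight `W = η^β/𝔼[η^β]`. -/
def bkWeight (η : Ω → ℝ) (β : ℝ) (ω : Ω) : ℝ :=
  η ω ^ β / (∫ ω', η ω' ^ β)

variable [IsProbabilityMeasure (ℙ : Measure Ω)] {b : ℕ} {η : Ω → ℝ}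

set_option linter.unusedSectionVars false

/-- `log x ≤ (k/s) * x^(s/k)` for `x ≥ 1`. -/
lemma log_le_aux {s x : ℝ} (hs : 0 < s) (hx : 1 ≤ x) (k : ℕ) :
    Real.log x ≤ ((k + 1 : ℝ) / s) * x ^ (s / (k + 1 : ℝ)) := by
  have hk : (0:ℝ) < (k + 1 : ℝ) := by positivity
  have hx0 : (0:ℝ) < x := lt_of_lt_of_le one_pos hx
  have h1 : (1:ℝ) ≤ x ^ (s / (k + 1 : ℝ)) := Real.one_le_rpow hx (by positivity)
  have h2 : Real.log (x ^ (s / (k + 1 : ℝ))) ≤ x ^ (s / (k + 1 : ℝ)) :=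
    (Real.log_le_sub_one_of_pos (by positivity)).trans (by linarith)
  rw [Real.log_rpow hx0] at h2
  calc Real.log x = ((k + 1 : ℝ) / s) * (s / (k + 1 : ℝ) * Real.log x) := by
        field_simp
    _ ≤ ((k + 1 : ℝ) / s) * x ^ (s / (k + 1 : ℝ)) := by
        apply mul_le_mul_of_nonneg_left h2 (by positivity)

/-- `(log x)^n ≤ C * x^s` for `x ≥ 1`. -/
lemma log_pow_le {s x : ℝ} (hs : 0 < s) (hx : 1 ≤ x) (n : ℕ) :
    (Real.log x) ^ n ≤ ((n + 1 : ℝ) / s) ^ n * x ^ s := by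
  have hx0 : (0:ℝ) < x := lt_of_lt_of_le one_pos hx
  have h0 : 0 ≤ Real.log x := Real.log_nonneg hx
  have h1 := log_le_aux hs hx n
  have h2 : (Real.log x) ^ n ≤ (((n + 1 : ℝ) / s) * x ^ (s / (n + 1 : ℝ))) ^ n :=
    pow_le_pow_left₀ h0 h1 n
  refine h2.trans ?_
  rw [mul_pow]
  apply mul_le_mul_of_nonneg_left _ (by positivity)
  rw [← Real.rpow_natCast (x ^ (s / (n + 1 : ℝ))), ← Real.rpow_mul hx0.le]
  apply Real.rpow_le_rpow_of_exponent_le hx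
  rw [div_mul_eq_mul_div, div_le_iff₀ (by positivity)]
  nlinarith [hs.le, Nat.cast_nonneg (α := ℝ) n]

/-- Master pointwise bound: `x^s * |log x|^n ≤ C * (x^(s/2) + x^(2s))` for `x ≥ 0`. -/
lemma master_bound (n : ℕ) {s : ℝ} (hs : 0 < s) :
    ∃ C : ℝ, 0 ≤ C ∧ ∀ x : ℝ, 0 ≤ x →
      x ^ s * |Real.log x| ^ n ≤ C * (x ^ (s/2) + x ^ (2*s)) := by
  refine ⟨max (((n + 1 : ℝ) / (s/2)) ^ n) (((n + 1 : ℝ) / s) ^ n), le_max_of_le_left (by positivity), ?_⟩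
  intro x hx
  set C := max (((n + 1 : ℝ) / (s/2)) ^ n) (((n + 1 : ℝ) / s) ^ n) with hC
  have hC0 : 0 ≤ C := le_max_of_le_left (by positivity)
  rcases eq_or_lt_of_le hx with h0 | hx0
  · rw [← h0]
    rw [Real.zero_rpow hs.ne', Real.zero_rpow (by positivity : (s/2:ℝ) ≠ 0),
      Real.zero_rpow (by positivity : (2*s:ℝ) ≠ 0)]
    simp
  rcases le_total x 1 with hx1 | hx1
  · -- 0 < x ≤ 1 : use y = 1/x ≥ 1
    have hy1 : 1 ≤ x⁻¹ := (one_le_inv₀ hx0).2 hx1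
    have habs : |Real.log x| = Real.log x⁻¹ := by
      rw [Real.log_inv, abs_of_nonpos (Real.log_nonpos hx0.le hx1)]
    have hs2 : (0:ℝ) < s/2 := by positivity
    have h1 : (Real.log x⁻¹) ^ n ≤ ((n + 1 : ℝ) / (s/2)) ^ n * (x⁻¹) ^ (s/2) :=
      log_pow_le hs2 hy1 n
    have hxx : x ^ s * (x ^ (s/2))⁻¹ = x ^ (s/2) := by
      rw [← Real.rpow_neg hx0.le, ← Real.rpow_add hx0]
      congr 1
      ring
    calc x ^ s * |Real.log x| ^ n = x ^ s * (Real.log x⁻¹) ^ n := by rw [habs]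
      _ ≤ x ^ s * (((n + 1 : ℝ) / (s/2)) ^ n * (x⁻¹) ^ (s/2)) :=
          mul_le_mul_of_nonneg_left h1 (Real.rpow_nonneg hx0.le s)
      _ = ((n + 1 : ℝ) / (s/2)) ^ n * (x ^ s * (x ^ (s/2))⁻¹) := by
          rw [Real.inv_rpow hx0.le]; ring
      _ = ((n + 1 : ℝ) / (s/2)) ^ n * x ^ (s/2) := by rw [hxx]
      _ ≤ C * x ^ (s/2) :=
          mul_le_mul_of_nonneg_right (le_max_left _ _) (Real.rpow_nonneg hx0.le _)
      _ ≤ C * (x ^ (s/2) + x ^ (2*s)) := by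
          have := Real.rpow_nonneg hx0.le (2*s)
          nlinarith
  · -- x ≥ 1
    have habs : |Real.log x| = Real.log x := abs_of_nonneg (Real.log_nonneg hx1)
    have h1 : (Real.log x) ^ n ≤ ((n + 1 : ℝ) / s) ^ n * x ^ s := log_pow_le hs hx1 n
    have hxx : x ^ s * x ^ s = x ^ (2*s) := by
      rw [← Real.rpow_add hx0]; ring_nf
    calc x ^ s * |Real.log x| ^ n = x ^ s * (Real.log x) ^ n := by rw [habs]
      _ ≤ x ^ s * (((n + 1 : ℝ) / s) ^ n * x ^ s) :=
          mul_le_mul_of_nonneg_left h1 (Real.rpow_nonneg hx0.le s)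
      _ = ((n + 1 : ℝ) / s) ^ n * (x ^ s * x ^ s) := by ring
      _ = ((n + 1 : ℝ) / s) ^ n * x ^ (2*s) := by rw [hxx]
      _ ≤ C * x ^ (2*s) :=
          mul_le_mul_of_nonneg_right (le_max_right _ _) (Real.rpow_nonneg hx0.le _)
      _ ≤ C * (x ^ (s/2) + x ^ (2*s)) := by
          have := Real.rpow_nonneg hx0.le (s/2)
          nlinarith

/-- The integrand family: `F k t ω = η^t (log η)^k`. -/
def Fk (η : Ω → ℝ) (k : ℕ) (t : ℝ) : ℝ := ∫ ω, η ω ^ t * (Real.log (η ω)) ^ k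

lemma meas_kernel (henv : IsBoundaryEnv b η) {t : ℝ} (ht : 0 < t) (k : ℕ) :
    Measurable fun ω => η ω ^ t * (Real.log (η ω)) ^ k :=
  ((Real.continuous_rpow_const ht.le).measurable.comp henv.meas).mul
    ((Real.measurable_log.comp henv.meas).pow_const k)

lemma integrable_abs_kernel (henv : IsBoundaryEnv b η) {t : ℝ} (ht : 0 < t) (k : ℕ) :
    Integrable fun ω => η ω ^ t * |Real.log (η ω)| ^ k := by
  obtain ⟨C, hC0, hC⟩ := master_bound k ht
  refine Integrable.mono' (g := fun ω => C * (η ω ^ (t/2) + η ω ^ (2*t)))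
    (((henv.mom (t/2) (by positivity)).add (henv.mom (2*t) (by positivity))).const_mul C)
    (((Real.continuous_rpow_const ht.le).measurable.comp henv.meas).mul
      ((Real.measurable_log.comp henv.meas).abs.pow_const k)).aestronglyMeasurable
    (Filter.Eventually.of_forall fun ω => ?_)
  have h1 : 0 ≤ η ω ^ t * |Real.log (η ω)| ^ k :=
    mul_nonneg (Real.rpow_nonneg (henv.nonneg ω) t) (pow_nonneg (abs_nonneg _) k)
  rw [Real.norm_eq_abs, abs_of_nonneg h1]
  exact hC _ (henv.nonneg ω)

lemma integrable_kernel (henv : IsBoundaryEnv b η) {t : ℝ} (ht : 0 < t) (k : ℕ) :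
    Integrable fun ω => η ω ^ t * (Real.log (η ω)) ^ k := by
  refine (integrable_abs_kernel henv ht k).mono' (meas_kernel henv ht k).aestronglyMeasurable
    (Filter.Eventually.of_forall fun ω => ?_)
  rw [Real.norm_eq_abs, abs_mul, abs_pow,
    abs_of_nonneg (Real.rpow_nonneg (henv.nonneg ω) t)]

lemma hasDerivAt_pt {x : ℝ} (hx : 0 ≤ x) (k : ℕ) {t : ℝ} (ht : 0 < t) :
    HasDerivAt (fun s => x ^ s * (Real.log x) ^ k) (x ^ t * (Real.log x) ^ (k+1)) t := by
  rcases eq_or_lt_of_le hx with h0 | hx0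
  · have he : (fun s => x ^ s * (Real.log x) ^ k) =ᶠ[𝓝 t] fun _ => 0 := by
      filter_upwards [isOpen_Ioi.mem_nhds ht] with s hs
      rw [← h0, Real.zero_rpow (ne_of_gt hs), zero_mul]
    have h1 := (hasDerivAt_const t (0:ℝ)).congr_of_eventuallyEq he
    refine h1.congr_deriv ?_
    rw [← h0, Real.log_zero, zero_pow (Nat.succ_ne_zero k), mul_zero]
  · have h1 : HasDerivAt (fun s => Real.exp (Real.log x * s)) (Real.exp (Real.log x * t) * Real.log x) t := by
      simpa using ((hasDerivAt_id t).const_mul (Real.log x)).exp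
    have h2 := h1.mul_const ((Real.log x) ^ k)
    have hfe : (fun s => x ^ s * (Real.log x) ^ k)
        = fun s => Real.exp (Real.log x * s) * (Real.log x) ^ k :=
      funext fun s => by rw [Real.rpow_def_of_pos hx0]
    rw [hfe]
    refine h2.congr_deriv ?_
    rw [Real.rpow_def_of_pos hx0, pow_succ]
    ring

lemma hasDerivAt_Fk (henv : IsBoundaryEnv b η) (k : ℕ) {t₀ : ℝ} (ht : 0 < t₀) :
    HasDerivAt (Fk η k) (Fk η (k+1) t₀) t₀ := by
  have hb : Integrable (fun ω => (η ω ^ (t₀/2) + η ω ^ (2*t₀)) * |Real.log (η ω)| ^ (k+1)) := by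
    have h1 := integrable_abs_kernel henv (show (0:ℝ) < t₀/2 by positivity) (k+1)
    have h2 := integrable_abs_kernel henv (show (0:ℝ) < 2*t₀ by positivity) (k+1)
    simpa [add_mul, Pi.add_def] using h1.add h2
  have key := hasDerivAt_integral_of_dominated_loc_of_deriv_le
    (F := fun t ω => η ω ^ t * (Real.log (η ω)) ^ k)
    (F' := fun t ω => η ω ^ t * (Real.log (η ω)) ^ (k+1))
    (bound := fun ω => (η ω ^ (t₀/2) + η ω ^ (2*t₀)) * |Real.log (η ω)| ^ (k+1))
    (x₀ := t₀) (s := Metric.ball t₀ (t₀/2)) (Metric.ball_mem_nhds _ (by positivity))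
    ?_ (integrable_kernel henv ht k) (meas_kernel henv ht (k+1)).aestronglyMeasurable ?_ hb ?_
  · exact key.2
  · filter_upwards [isOpen_Ioi.mem_nhds ht] with t htpos
    exact (meas_kernel henv htpos k).aestronglyMeasurable
  · refine Filter.Eventually.of_forall fun ω => fun t htmem => ?_
    rw [Metric.mem_ball, Real.dist_eq, abs_lt] at htmem
    have hη := henv.nonneg ω
    have hrange : t₀/2 ≤ t ∧ t ≤ 2*t₀ := by constructor <;> linarith [htmem.1, htmem.2]
    have hmain : η ω ^ t ≤ η ω ^ (t₀/2) + η ω ^ (2*t₀) := by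
      rcases eq_or_lt_of_le hη with h0 | hpos
      · rw [← h0, Real.zero_rpow (by linarith [hrange.1] : t ≠ 0)]
        positivity
      · rcases le_total (η ω) 1 with h1 | h1
        · have := Real.rpow_le_rpow_of_exponent_ge hpos h1 hrange.1
          have h2 : 0 ≤ η ω ^ (2*t₀) := Real.rpow_nonneg hη _
          linarith
        · have := Real.rpow_le_rpow_of_exponent_le h1 hrange.2
          have h2 : 0 ≤ η ω ^ (t₀/2) := Real.rpow_nonneg hη _
          linarith
    calc ‖η ω ^ t * (Real.log (η ω)) ^ (k+1)‖
        = η ω ^ t * |Real.log (η ω)| ^ (k+1) := by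
          rw [Real.norm_eq_abs, abs_mul, abs_pow, abs_of_nonneg (Real.rpow_nonneg hη t)]
      _ ≤ (η ω ^ (t₀/2) + η ω ^ (2*t₀)) * |Real.log (η ω)| ^ (k+1) :=
          mul_le_mul_of_nonneg_right hmain (pow_nonneg (abs_nonneg _) _)
  · refine Filter.Eventually.of_forall fun ω => fun t htmem => ?_
    rw [Metric.mem_ball, Real.dist_eq, abs_lt] at htmem
    exact hasDerivAt_pt (henv.nonneg ω) k (by linarith [htmem.1])
lemma Fk_zero_eq (t : ℝ) : Fk η 0 t = ∫ ω, η ω ^ t := by simp [Fk]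

lemma Fk_pos (henv : IsBoundaryEnv b η) {t : ℝ} (ht : 0 < t) : 0 < Fk η 0 t := by
  rw [Fk_zero_eq]
  have hA : MeasurableSet {ω : Ω | 1 < η ω} := measurableSet_lt measurable_const henv.meas
  have h1 : (ℙ {ω : Ω | 1 < η ω}).toReal
      = ∫ ω, Set.indicator {ω : Ω | 1 < η ω} (fun _ => (1:ℝ)) ω := by
    rw [integral_indicator_const _ hA, smul_eq_mul, mul_one, measureReal_def]
  have h2 : ∫ ω, Set.indicator {ω : Ω | 1 < η ω} (fun _ => (1:ℝ)) ω ≤ ∫ ω, η ω ^ t := by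
    apply integral_mono ((integrable_const (1:ℝ)).indicator hA) (henv.mom t ht)
    intro ω
    by_cases hω : ω ∈ {ω : Ω | 1 < η ω}
    · rw [Set.indicator_of_mem hω]
      exact Real.one_le_rpow (le_of_lt hω) ht.le
    · rw [Set.indicator_of_notMem hω]
      exact Real.rpow_nonneg (henv.nonneg ω) t
  have h3 : 0 < (ℙ {ω : Ω | 1 < η ω}).toReal :=
    ENNReal.toReal_pos (ne_of_gt henv.pos) (measure_ne_top ℙ _)
  linarith

lemma psi_eq (henv : IsBoundaryEnv b η) {t : ℝ} (ht : 0 < t) :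
    psiFun b η t = Real.log b + Real.log (Fk η 0 t) := by
  have hb : (0:ℝ) < b := by
    have := henv.two_le
    exact_mod_cast Nat.cast_pos.2 (by omega)
  simp only [psiFun]
  rw [integral_const_mul, ← Fk_zero_eq,
    Real.log_mul (ne_of_gt hb) (Fk_pos henv ht).ne']

/-- `ψ'` as an explicit function. -/
def psiP (η : Ω → ℝ) (t : ℝ) : ℝ := Fk η 1 t / Fk η 0 t

lemma hasDerivAt_psi (henv : IsBoundaryEnv b η) {t : ℝ} (ht : 0 < t) :
    HasDerivAt (psiFun b η) (psiP η t) t := by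
  have h := ((hasDerivAt_Fk henv 0 ht).log (Fk_pos henv ht).ne').const_add (Real.log b)
  refine h.congr_of_eventuallyEq ?_
  filter_upwards [isOpen_Ioi.mem_nhds ht] with s hs
  exact psi_eq henv hs

lemma hasDerivAt_psiP (henv : IsBoundaryEnv b η) {t : ℝ} (ht : 0 < t) :
    HasDerivAt (psiP η)
      ((Fk η 2 t * Fk η 0 t - Fk η 1 t ^ 2) / (Fk η 0 t) ^ 2) t := by
  have h := (hasDerivAt_Fk henv 1 ht).div (hasDerivAt_Fk henv 0 ht) (Fk_pos henv ht).ne'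
  refine h.congr_deriv ?_
  ring

lemma var_pos (henv : IsBoundaryEnv b η) {t : ℝ} (ht : 0 < t) :
    0 < Fk η 2 t * Fk η 0 t - Fk η 1 t ^ 2 := by
  have hF0 := Fk_pos henv ht
  set m := Fk η 1 t / Fk η 0 t with hm
  have hint0 := integrable_kernel henv ht 0
  have hint1 := integrable_kernel henv ht 1
  have hint2 := integrable_kernel henv ht 2
  have hid : (fun ω => η ω ^ t * (Real.log (η ω) - m) ^ 2)
      = fun ω => (η ω ^ t * (Real.log (η ω)) ^ 2 - (2*m) * (η ω ^ t * (Real.log (η ω)) ^ 1))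
          + m ^ 2 * (η ω ^ t * (Real.log (η ω)) ^ 0) := funext fun ω => by ring
  have hVint : Integrable (fun ω => η ω ^ t * (Real.log (η ω) - m) ^ 2) := by
    rw [hid]; exact (hint2.sub (hint1.const_mul (2*m))).add (hint0.const_mul (m ^ 2))
  have hVval : ∫ ω, η ω ^ t * (Real.log (η ω) - m) ^ 2
      = Fk η 2 t - 2*m*Fk η 1 t + m ^ 2 * Fk η 0 t := by
    have hsub : Integrable (fun ω => η ω ^ t * (Real.log (η ω)) ^ 2
        - 2*m * (η ω ^ t * (Real.log (η ω)) ^ 1)) := hint2.sub (hint1.const_mul (2*m))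
    have hcm : Integrable (fun ω => m ^ 2 * (η ω ^ t * (Real.log (η ω)) ^ 0)) :=
      hint0.const_mul (m ^ 2)
    rw [hid, integral_add hsub hcm,
      integral_sub hint2 (hint1.const_mul (2*m)), integral_const_mul, integral_const_mul]
    simp only [Fk]
  have hVnn : 0 ≤ ∫ ω, η ω ^ t * (Real.log (η ω) - m) ^ 2 :=
    integral_nonneg fun ω => mul_nonneg (Real.rpow_nonneg (henv.nonneg ω) t) (sq_nonneg _)
  rcases hVnn.lt_or_eq with hpos | heq
  · have key : Fk η 2 t * Fk η 0 t - Fk η 1 t ^ 2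
        = (∫ ω, η ω ^ t * (Real.log (η ω) - m) ^ 2) * Fk η 0 t := by
      rw [hVval, hm]
      field_simp
      ring
    rw [key]
    exact mul_pos hpos hF0
  · exfalso
    have hae : (fun ω => η ω ^ t * (Real.log (η ω) - m) ^ 2) =ᵐ[ℙ] 0 :=
      (integral_eq_zero_iff_of_nonneg
        (fun ω => mul_nonneg (Real.rpow_nonneg (henv.nonneg ω) t) (sq_nonneg _)) hVint).1
        heq.symm
    set A : Set Ω := {ω | η ω = Real.exp m} with hA
    have hAmeas : MeasurableSet A := measurableSet_eq_fun henv.meas measurable_const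
    have hη_ae : ∀ᵐ ω : Ω, η ω = A.indicator (fun _ => Real.exp m) ω := by
      filter_upwards [hae] with ω hω
      have hω' : η ω ^ t * (Real.log (η ω) - m) ^ 2 = 0 := hω
      rcases mul_eq_zero.1 hω' with h1 | h1
      · have hη0 : η ω = 0 := by
          by_contra hne
          have hpos' : 0 < η ω := lt_of_le_of_ne (henv.nonneg ω) (Ne.symm hne)
          exact absurd h1 (ne_of_gt (Real.rpow_pos_of_pos hpos' t))
        have : ω ∉ A := by
          rw [hA]; simp only [Set.mem_setOf_eq, hη0]
          exact fun h => absurd h.symm (ne_of_gt (Real.exp_pos m))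
        rw [Set.indicator_of_notMem this, hη0]
      · have hlog : Real.log (η ω) = m := by
          have := sq_eq_zero_iff.1 h1; linarith
        rcases eq_or_lt_of_le (henv.nonneg ω) with h0 | hpos'
        · have : ω ∉ A := by
            rw [hA]; simp only [Set.mem_setOf_eq, ← h0]
            exact fun h => absurd h.symm (ne_of_gt (Real.exp_pos m))
          rw [Set.indicator_of_notMem this, ← h0]
        · have hmem : ω ∈ A := by
            rw [hA]; simp only [Set.mem_setOf_eq]
            rw [← hlog, Real.exp_log hpos']
          rw [Set.indicator_of_mem hmem]
          rw [← hlog, Real.exp_log hpos']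
    have hmean : (ℙ A).toReal * Real.exp m = 1 / b := by
      have h1 : ∫ ω, η ω = ∫ ω, A.indicator (fun _ => Real.exp m) ω :=
        integral_congr_ae hη_ae
      rw [henv.mean] at h1
      rw [integral_indicator_const _ hAmeas, smul_eq_mul, measureReal_def] at h1
      linarith [h1]
    have hb : (0:ℝ) < b := by
      have := henv.two_le
      exact_mod_cast Nat.cast_pos.2 (by omega)
    have hp0 : 0 < (ℙ A).toReal := by
      rcases (ENNReal.toReal_nonneg (a := ℙ A)).lt_or_eq with h | h
      · exact h
      · exfalso
        rw [← h, zero_mul] at hmean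
        have : (0:ℝ) < 1 / b := by positivity
        linarith
    have hloglin : (ℙ A).toReal * (Real.exp m * m) = 0 := by
      have h1 : ∫ ω, η ω * Real.log (η ω)
          = ∫ ω, A.indicator (fun _ => Real.exp m * m) ω := by
        apply integral_congr_ae
        filter_upwards [hη_ae] with ω hω
        by_cases hmem : ω ∈ A
        · rw [Set.indicator_of_mem hmem] at hω ⊢
          rw [hω, Real.log_exp]
        · rw [Set.indicator_of_notMem hmem] at hω ⊢
          rw [hω, zero_mul]
      rw [henv.loglin, integral_indicator_const _ hAmeas, smul_eq_mul, measureReal_def] at h1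
      linarith [h1]
    have hm0 : m = 0 := by
      have he := Real.exp_pos m
      rcases mul_eq_zero.1 hloglin with h | h
      · exact absurd h (ne_of_gt hp0)
      · rcases mul_eq_zero.1 h with h' | h'
        · exact absurd h' (ne_of_gt he)
        · exact h'
    have hae2 : ∀ᵐ ω : Ω, ¬ (1 < η ω) := by
      filter_upwards [hη_ae] with ω hω
      rw [hm0, Real.exp_zero] at hω
      by_cases hmem : ω ∈ A
      · rw [Set.indicator_of_mem hmem] at hω; rw [hω]; exact lt_irrefl 1
      · rw [Set.indicator_of_notMem hmem] at hω; rw [hω]; norm_num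
    have hzero : ℙ {ω : Ω | 1 < η ω} = 0 := by
      have h := ae_iff.mp hae2
      simpa [not_not] using h
    exact absurd hzero (ne_of_gt henv.pos)

lemma Fk_zero_one (henv : IsBoundaryEnv b η) : Fk η 0 1 = 1 / b := by
  rw [Fk_zero_eq, ← henv.mean]
  apply integral_congr_ae (Filter.Eventually.of_forall fun ω => ?_)
  rw [Real.rpow_one]

lemma Fk_one_one (henv : IsBoundaryEnv b η) : Fk η 1 1 = 0 := by
  rw [← henv.loglin]
  apply integral_congr_ae (Filter.Eventually.of_forall fun ω => ?_)
  rw [Real.rpow_one, pow_one]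

lemma psiP_one (henv : IsBoundaryEnv b η) : psiP η 1 = 0 := by
  rw [psiP, Fk_one_one henv, zero_div]

lemma psi_one (henv : IsBoundaryEnv b η) : psiFun b η 1 = 0 := by
  have hb : (0:ℝ) < b := by
    have := henv.two_le
    exact_mod_cast Nat.cast_pos.2 (by omega)
  rw [psi_eq henv one_pos, Fk_zero_one henv, one_div, Real.log_inv]
  ring

lemma psiP_strictMono (henv : IsBoundaryEnv b η) : StrictMonoOn (psiP η) (Set.Ioi 0) := by
  apply strictMonoOn_of_deriv_pos (convex_Ioi 0)
  · exact fun t ht => (hasDerivAt_psiP henv ht).continuousAt.continuousWithinAt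
  · intro x hx
    rw [interior_Ioi] at hx
    rw [(hasDerivAt_psiP henv hx).deriv]
    exact div_pos (var_pos henv hx) (pow_pos (Fk_pos henv hx) 2)

lemma psi_deriv_eq (henv : IsBoundaryEnv b η) {t : ℝ} (ht : 0 < t) :
    deriv (psiFun b η) t = psiP η t := (hasDerivAt_psi henv ht).deriv

lemma psi_strictAnti (henv : IsBoundaryEnv b η) :
    StrictAntiOn (psiFun b η) (Set.Ioc 0 1) := by
  apply strictAntiOn_of_deriv_neg (convex_Ioc 0 1)
  · exact fun t ht => (hasDerivAt_psi henv ht.1).continuousAt.continuousWithinAt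
  · intro x hx
    rw [interior_Ioc] at hx
    rw [psi_deriv_eq henv hx.1]
    have := psiP_strictMono henv (Set.mem_Ioi.2 hx.1) (Set.mem_Ioi.2 one_pos) hx.2
    rw [psiP_one henv] at this
    exact this

lemma psi_strictMono (henv : IsBoundaryEnv b η) :
    StrictMonoOn (psiFun b η) (Set.Ici 1) := by
  apply strictMonoOn_of_deriv_pos (convex_Ici 1)
  · exact fun t ht => (hasDerivAt_psi henv (lt_of_lt_of_le one_pos ht)).continuousAt.continuousWithinAt
  · intro x hx
    rw [interior_Ici] at hx
    rw [psi_deriv_eq henv (lt_trans one_pos hx)]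
    have := psiP_strictMono henv (Set.mem_Ioi.2 one_pos) (Set.mem_Ioi.2 (lt_trans one_pos hx)) hx
    rw [psiP_one henv] at this
    exact this

lemma psi_nonneg (henv : IsBoundaryEnv b η) {t : ℝ} (ht : 0 < t) : 0 ≤ psiFun b η t := by
  rcases lt_trichotomy t 1 with h | h | h
  · have := psi_strictAnti henv (Set.mem_Ioc.2 ⟨ht, h.le⟩) (Set.mem_Ioc.2 ⟨one_pos, le_refl 1⟩) h
    rw [psi_one henv] at this
    exact this.le
  · rw [h, psi_one henv]
  · have := psi_strictMono henv (Set.mem_Ici.2 (le_refl 1)) (Set.mem_Ici.2 h.le) h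
    rw [psi_one henv] at this
    exact this.le

/-- The auxiliary function `g(β) = β ψ'(β) − ψ(β)`. -/
def gFun (b : ℕ) (η : Ω → ℝ) (t : ℝ) : ℝ := t * psiP η t - psiFun b η t

lemma hasDerivAt_g (henv : IsBoundaryEnv b η) {t : ℝ} (ht : 0 < t) :
    HasDerivAt (gFun b η)
      (t * ((Fk η 2 t * Fk η 0 t - Fk η 1 t ^ 2) / (Fk η 0 t) ^ 2)) t := by
  have h1 := (hasDerivAt_id t).mul (hasDerivAt_psiP henv ht)
  have h2 := h1.sub (hasDerivAt_psi henv ht)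
  refine h2.congr_deriv ?_
  rw [id]
  ring

lemma g_strictMono (henv : IsBoundaryEnv b η) : StrictMonoOn (gFun b η) (Set.Ioi 0) := by
  apply strictMonoOn_of_deriv_pos (convex_Ioi 0)
  · exact fun t ht => (hasDerivAt_g henv ht).continuousAt.continuousWithinAt
  · intro x hx
    rw [interior_Ioi] at hx
    rw [(hasDerivAt_g henv hx).deriv]
    exact mul_pos hx (div_pos (var_pos henv hx) (pow_pos (Fk_pos henv hx) 2))

lemma g_one (henv : IsBoundaryEnv b η) : gFun b η 1 = 0 := by
  rw [gFun, psiP_one henv, psi_one henv]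
  ring
lemma integral_W_logW (henv : IsBoundaryEnv b η) {β : ℝ} (hβ : 0 < β) :
    (∫ ω, bkWeight η β ω * Real.log (bkWeight η β ω)) = gFun b η β + Real.log b := by
  have hm : 0 < Fk η 0 β := Fk_pos henv hβ
  have hmeq : (∫ ω', η ω' ^ β) = Fk η 0 β := (Fk_zero_eq β).symm
  set m := Fk η 0 β with hmdef
  have hpt : ∀ ω, bkWeight η β ω * Real.log (bkWeight η β ω)
      = (β/m) * (η ω ^ β * (Real.log (η ω)) ^ 1)
        - (Real.log m / m) * (η ω ^ β * (Real.log (η ω)) ^ 0) := by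
    intro ω
    rcases eq_or_lt_of_le (henv.nonneg ω) with h0 | hpos
    · rw [bkWeight, hmeq, ← h0, Real.zero_rpow (ne_of_gt hβ), zero_div, zero_mul]
      ring
    · have hrp : 0 < η ω ^ β := Real.rpow_pos_of_pos hpos β
      rw [bkWeight, hmeq, Real.log_div (ne_of_gt hrp) (ne_of_gt hm), Real.log_rpow hpos]
      field_simp
  have hint1 : Integrable (fun ω => (β/m) * (η ω ^ β * (Real.log (η ω)) ^ 1)) :=
    (integrable_kernel henv hβ 1).const_mul _
  have hint0 : Integrable (fun ω => (Real.log m / m) * (η ω ^ β * (Real.log (η ω)) ^ 0)) :=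
    (integrable_kernel henv hβ 0).const_mul _
  calc (∫ ω, bkWeight η β ω * Real.log (bkWeight η β ω))
      = ∫ ω, ((β/m) * (η ω ^ β * (Real.log (η ω)) ^ 1)
          - (Real.log m / m) * (η ω ^ β * (Real.log (η ω)) ^ 0)) :=
        integral_congr_ae (Filter.Eventually.of_forall hpt)
    _ = (β/m) * Fk η 1 β - (Real.log m / m) * Fk η 0 β := by
        rw [integral_sub hint1 hint0, integral_const_mul, integral_const_mul]
        simp only [Fk]
    _ = gFun b η β + Real.log b := by
        rw [gFun, psiP, psi_eq henv hβ, ← hmdef]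
        field_simp
        ring

/-- Complexified integral `G(z) = ∫ η^z` (with the convention `0^z = 0`). -/
def Gc (η : Ω → ℝ) (z : ℂ) : ℂ :=
  ∫ ω, if η ω = 0 then 0 else Complex.exp ((Real.log (η ω) : ℂ) * z)

lemma meas_Gc_kernel (henv : IsBoundaryEnv b η) (z : ℂ) :
    Measurable fun ω => if η ω = 0 then (0:ℂ) else Complex.exp ((Real.log (η ω) : ℂ) * z) := by
  apply Measurable.ite (henv.meas (measurableSet_singleton 0)) measurable_const
  exact Complex.measurable_exp.comp
    ((Complex.measurable_ofReal.comp (Real.measurable_log.comp henv.meas)).mul measurable_const)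

lemma meas_Gc_kernel' (henv : IsBoundaryEnv b η) (z : ℂ) :
    Measurable fun ω =>
      if η ω = 0 then (0:ℂ)
      else (Real.log (η ω) : ℂ) * Complex.exp ((Real.log (η ω) : ℂ) * z) := by
  apply Measurable.ite (henv.meas (measurableSet_singleton 0)) measurable_const
  exact (Complex.measurable_ofReal.comp (Real.measurable_log.comp henv.meas)).mul
    (Complex.measurable_exp.comp
      ((Complex.measurable_ofReal.comp (Real.measurable_log.comp henv.meas)).mul measurable_const))

lemma norm_Gc_kernel (henv : IsBoundaryEnv b η) (z : ℂ) (ω : Ω) :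
    ‖if η ω = 0 then (0:ℂ) else Complex.exp ((Real.log (η ω) : ℂ) * z)‖
      = if η ω = 0 then 0 else η ω ^ z.re := by
  by_cases h0 : η ω = 0
  · simp [h0]
  · have hpos : 0 < η ω := lt_of_le_of_ne (henv.nonneg ω) (Ne.symm h0)
    rw [if_neg h0, if_neg h0, Complex.norm_exp]
    congr 1
    rw [Complex.re_ofReal_mul, Real.rpow_def_of_pos hpos]

lemma rpow_re_le_bound (henv : IsBoundaryEnv b η) {t₀ : ℝ} (ht : 0 < t₀) {s : ℝ}
    (hs1 : t₀/2 ≤ s) (hs2 : s ≤ 2*t₀) (ω : Ω) :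
    η ω ^ s ≤ η ω ^ (t₀/2) + η ω ^ (2*t₀) := by
  have hη := henv.nonneg ω
  rcases eq_or_lt_of_le hη with h0 | hpos
  · rw [← h0, Real.zero_rpow (by linarith : s ≠ 0)]
    positivity
  · rcases le_total (η ω) 1 with h1 | h1
    · have := Real.rpow_le_rpow_of_exponent_ge hpos h1 hs1
      have h2 : 0 ≤ η ω ^ (2*t₀) := Real.rpow_nonneg hη _
      linarith
    · have := Real.rpow_le_rpow_of_exponent_le h1 hs2
      have h2 : 0 ≤ η ω ^ (t₀/2) := Real.rpow_nonneg hη _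
      linarith

lemma hasDerivAt_Gc (henv : IsBoundaryEnv b η) {z₀ : ℂ} (hz : 0 < z₀.re) :
    HasDerivAt (Gc η)
      (∫ ω, if η ω = 0 then 0
        else (Real.log (η ω) : ℂ) * Complex.exp ((Real.log (η ω) : ℂ) * z₀)) z₀ := by
  set t₀ := z₀.re with ht₀
  have hb : Integrable (fun ω => (η ω ^ (t₀/2) + η ω ^ (2*t₀)) * |Real.log (η ω)| ^ 1) := by
    have h1 := integrable_abs_kernel henv (show (0:ℝ) < t₀/2 by positivity) 1
    have h2 := integrable_abs_kernel henv (show (0:ℝ) < 2*t₀ by positivity) 1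
    simpa [add_mul, Pi.add_def] using h1.add h2
  have hrange : ∀ z : ℂ, z ∈ Metric.ball z₀ (t₀/2) → t₀/2 ≤ z.re ∧ z.re ≤ 2*t₀ := by
    intro z hzm
    rw [Metric.mem_ball, Complex.dist_eq] at hzm
    have h1 : |z.re - z₀.re| ≤ ‖z - z₀‖ := by
      simpa using Complex.abs_re_le_norm (z - z₀)
    have h2 : |z.re - z₀.re| < t₀/2 := lt_of_le_of_lt h1 hzm
    rw [abs_lt] at h2
    constructor <;> [linarith [h2.1]; linarith [h2.2]]
  have hFint : Integrable
      (fun ω => if η ω = 0 then (0:ℂ) else Complex.exp ((Real.log (η ω) : ℂ) * z₀)) := by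
    refine Integrable.mono' (g := fun ω => η ω ^ (t₀/2) + η ω ^ (2*t₀))
      ((henv.mom (t₀/2) (by positivity)).add (henv.mom (2*t₀) (by positivity)))
      (meas_Gc_kernel henv z₀).aestronglyMeasurable
      (Filter.Eventually.of_forall fun ω => ?_)
    rw [norm_Gc_kernel henv z₀ ω]
    by_cases h0 : η ω = 0
    · rw [if_pos h0]
      have := Real.rpow_nonneg (henv.nonneg ω) (t₀/2)
      have := Real.rpow_nonneg (henv.nonneg ω) (2*t₀)
      linarith
    · rw [if_neg h0]
      exact rpow_re_le_bound henv hz (by linarith) (by linarith) ω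
  have key := hasDerivAt_integral_of_dominated_loc_of_deriv_le
    (F := fun z ω => if η ω = 0 then (0:ℂ) else Complex.exp ((Real.log (η ω) : ℂ) * z))
    (F' := fun z ω => if η ω = 0 then (0:ℂ)
      else (Real.log (η ω) : ℂ) * Complex.exp ((Real.log (η ω) : ℂ) * z))
    (bound := fun ω => (η ω ^ (t₀/2) + η ω ^ (2*t₀)) * |Real.log (η ω)| ^ 1)
    (x₀ := z₀) (s := Metric.ball z₀ (t₀/2)) (Metric.ball_mem_nhds _ (by positivity))
    (Filter.Eventually.of_forall fun z => (meas_Gc_kernel henv z).aestronglyMeasurable)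
    hFint (meas_Gc_kernel' henv z₀).aestronglyMeasurable ?_ hb ?_
  · exact key.2
  · refine Filter.Eventually.of_forall fun ω => fun z hzm => ?_
    by_cases h0 : η ω = 0
    · simp only [if_pos h0, norm_zero]
      have h1 : 0 ≤ η ω ^ (t₀/2) + η ω ^ (2*t₀) := by
        have := Real.rpow_nonneg (henv.nonneg ω) (t₀/2)
        have := Real.rpow_nonneg (henv.nonneg ω) (2*t₀)
        linarith
      exact mul_nonneg h1 (pow_nonneg (abs_nonneg _) 1)
    · simp only [if_neg h0]
      have hpos : 0 < η ω := lt_of_le_of_ne (henv.nonneg ω) (Ne.symm h0)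
      rw [norm_mul, Complex.norm_real, Real.norm_eq_abs, Complex.norm_exp,
        Complex.re_ofReal_mul, ← Real.rpow_def_of_pos hpos]
      rw [pow_one]
      rw [mul_comm (|Real.log (η ω)|) _]
      apply mul_le_mul_of_nonneg_right _ (abs_nonneg _)
      exact rpow_re_le_bound henv hz (hrange z hzm).1 (hrange z hzm).2 ω
  · refine Filter.Eventually.of_forall fun ω => fun z _ => ?_
    by_cases h0 : η ω = 0
    · simp only [if_pos h0]
      exact hasDerivAt_const z 0
    · simp only [if_neg h0]
      have h1 := ((hasDerivAt_id z).const_mul (Real.log (η ω) : ℂ)).cexp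
      simpa [mul_comm] using h1

lemma Gc_real (henv : IsBoundaryEnv b η) {t : ℝ} (ht : 0 < t) :
    Gc η (t : ℂ) = ((Fk η 0 t : ℝ) : ℂ) := by
  rw [Gc, Fk_zero_eq,
    show ((∫ ω, η ω ^ t : ℝ) : ℂ) = ∫ ω, ((η ω ^ t : ℝ) : ℂ) from (integral_ofReal (𝕜 := ℂ)).symm]
  apply integral_congr_ae (Filter.Eventually.of_forall fun ω => ?_)
  by_cases h0 : η ω = 0
  · rw [if_pos h0, h0, Real.zero_rpow (ne_of_gt ht)]
    simp
  · have hpos : 0 < η ω := lt_of_le_of_ne (henv.nonneg ω) (Ne.symm h0)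
    rw [if_neg h0, Real.rpow_def_of_pos hpos, Complex.ofReal_exp, Complex.ofReal_mul]

lemma analyticOnNhd_Gc (henv : IsBoundaryEnv b η) :
    AnalyticOnNhd ℂ (Gc η) {z : ℂ | 0 < z.re} :=
  DifferentiableOn.analyticOnNhd
    (fun _ hz => (hasDerivAt_Gc henv hz).differentiableAt.differentiableWithinAt)
    (isOpen_lt continuous_const Complex.continuous_re)

lemma analyticOnNhd_psi (henv : IsBoundaryEnv b η) :
    AnalyticOnNhd ℝ (psiFun b η) (Set.Ioi 0) := by
  intro t ht
  have hb : (0:ℝ) < b := by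
    have := henv.two_le
    exact_mod_cast Nat.cast_pos.2 (by omega)
  have htc : (0:ℝ) < ((t:ℂ)).re := by simpa using ht
  have hG : AnalyticAt ℂ (Gc η) (t:ℂ) := analyticOnNhd_Gc henv _ htc
  have hF0 := Fk_pos henv ht
  have hval : (b:ℂ) * Gc η (t:ℂ) = ((b * Fk η 0 t : ℝ) : ℂ) := by
    rw [Gc_real henv ht]; push_cast; ring
  have hmem : (b:ℂ) * Gc η (t:ℂ) ∈ Complex.slitPlane := by
    rw [hval]
    exact Complex.ofReal_mem_slitPlane.2 (mul_pos hb hF0)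
  have hlog : AnalyticAt ℂ (fun z => Complex.log ((b:ℂ) * Gc η z)) (t:ℂ) :=
    (analyticAt_const.mul hG).clog hmem
  have hcomp : AnalyticAt ℝ (fun s : ℝ => (Complex.log ((b:ℂ) * Gc η (s:ℂ))).re) t := by
    have h1 : AnalyticAt ℝ (fun z : ℂ => Complex.log ((b:ℂ) * Gc η z)) ((Complex.ofRealCLM : ℝ →L[ℝ] ℂ) t) :=
      hlog.restrictScalars
    have h2 : AnalyticAt ℝ (fun s : ℝ => ((Complex.ofRealCLM : ℝ →L[ℝ] ℂ) s)) t :=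
      Complex.ofRealCLM.analyticAt t
    exact (Complex.reCLM.analyticAt _).comp (h1.comp h2)
  refine hcomp.congr ?_
  filter_upwards [isOpen_Ioi.mem_nhds ht] with s hs
  have hval' : (b:ℂ) * Gc η (s:ℂ) = ((b * Fk η 0 s : ℝ):ℂ) := by
    rw [Gc_real henv hs]; push_cast; ring
  show (Complex.log ((b:ℂ) * Gc η (s:ℂ))).re = psiFun b η s
  rw [hval', Complex.log_ofReal_re]
  simp only [psiFun]
  rw [integral_const_mul, ← Fk_zero_eq]

lemma contDiffOn_psi (henv : IsBoundaryEnv b η) :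
    ContDiffOn ℝ (⊤ : ℕ∞) (psiFun b η) (Set.Ioi 0) :=
  (analyticOnNhd_psi henv).contDiffOn isOpen_Ioi.uniqueDiffOn

lemma psi_strictConvex (henv : IsBoundaryEnv b η) :
    StrictConvexOn ℝ (Set.Ioi 0) (psiFun b η) := by
  apply strictConvexOn_of_deriv2_pos (convex_Ioi 0)
  · exact fun t ht => (hasDerivAt_psi henv ht).continuousAt.continuousWithinAt
  · intro x hx
    rw [interior_Ioi] at hx
    have h1 : deriv (psiFun b η) =ᶠ[𝓝 x] psiP η := by
      filter_upwards [isOpen_Ioi.mem_nhds hx] with s hs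
      exact psi_deriv_eq henv hs
    have h2 : deriv^[2] (psiFun b η) x = deriv (psiP η) x := by
      show deriv^[1+1] (psiFun b η) x = _
      rw [Function.iterate_add_apply]
      simp only [Function.iterate_one]
      exact Filter.EventuallyEq.deriv_eq h1
    rw [h2, (hasDerivAt_psiP henv hx).deriv]
    exact div_pos (var_pos henv hx) (pow_pos (Fk_pos henv hx) 2)

/-- Properties of `ψ` in the boundary case.
(i) `ψ` is `C^∞` on `(0,∞)`; (ii) `ψ(1) = 0` and `ψ′(1) = 0`; (iii) `ψ` is strictly
decreasing on `(0,1]`, strictly increasing on `[1,∞)`, and nonnegative on `(0,∞)`;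
(iv) `ψ` is strictly convex on `(0,∞)`; (v) for every `β > 0` and `W = η^β/𝔼[η^β]`:
`𝔼[W log W] < log b ↔ β < 1`, `= ↔ β = 1`, `> ↔ β > 1`. -/
theorem statement14 {Ω : Type*} [MeasureSpace Ω] [IsProbabilityMeasure (ℙ : Measure Ω)]
    (b : ℕ) (η : Ω → ℝ) (henv : IsBoundaryEnv b η) :
    ContDiffOn ℝ (⊤ : ℕ∞) (psiFun b η) (Set.Ioi 0) ∧
    psiFun b η 1 = 0 ∧
    deriv (psiFun b η) 1 = 0 ∧
    StrictAntiOn (psiFun b η) (Set.Ioc 0 1) ∧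
    StrictMonoOn (psiFun b η) (Set.Ici 1) ∧
    (∀ t : ℝ, 0 < t → 0 ≤ psiFun b η t) ∧
    StrictConvexOn ℝ (Set.Ioi 0) (psiFun b η) ∧
    (∀ β : ℝ, 0 < β →
      (((∫ ω, bkWeight η β ω * Real.log (bkWeight η β ω)) < Real.log b) ↔ β < 1) ∧
      (((∫ ω, bkWeight η β ω * Real.log (bkWeight η β ω)) = Real.log b) ↔ β = 1) ∧
      ((Real.log b < ∫ ω, bkWeight η β ω * Real.log (bkWeight η β ω)) ↔ 1 < β)) := by
  refine ⟨contDiffOn_psi henv, psi_one henv, ?_, psi_strictAnti henv, psi_strictMono henv,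
    fun t ht => psi_nonneg henv ht, psi_strictConvex henv, ?_⟩
  · rw [psi_deriv_eq henv one_pos, psiP_one henv]
  · intro β hβ
    have hE := integral_W_logW henv hβ
    have h1 : gFun b η β < gFun b η 1 ↔ β < 1 :=
      (g_strictMono henv).lt_iff_lt (Set.mem_Ioi.2 hβ) (Set.mem_Ioi.2 one_pos)
    have h2 : gFun b η 1 < gFun b η β ↔ 1 < β :=
      (g_strictMono henv).lt_iff_lt (Set.mem_Ioi.2 one_pos) (Set.mem_Ioi.2 hβ)
    rw [g_one henv] at h1 h2
    refine ⟨?_, ?_, ?_⟩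
    · rw [hE]
      constructor
      · intro hc; exact h1.1 (by linarith)
      · intro hc; linarith [h1.2 hc]
    · rw [hE]
      constructor
      · intro hc
        have hg0 : gFun b η β = 0 := by linarith
        rcases lt_trichotomy β 1 with h | h | h
        · exact absurd (h1.2 h) (by rw [hg0]; exact lt_irrefl 0)
        · exact h
        · exact absurd (h2.2 h) (by rw [hg0]; exact lt_irrefl 0)
      · intro hc
        rw [hc, g_one henv]
        ring
    · rw [hE]
      constructor
      · intro hc; exact h2.1 (by linarith)
      · intro hc; linarith [h2.2 hc]

end MCCM
end
end

section
/- Let η and ψ be as given, let 1/2 < β < 1 and W = η^β/𝔼[η^β]. Then inf_{1/2 ≤ t ≤ 1} log 𝔼[b^{1−t} W^{2t}]/(t log b) = 1 − 2ψ(β)/log b; consequently, since such W is squared super-critical, D_F(W,b) = 2ψ(β)/log b. -/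
/-!
Integrating the tangent inequality `x ^ s ≥ x + (s - 1) x log x` of the convex map `s ↦ x ^ s`
at `s = 1` against the law of `η`, the normalisations `𝔼[η] = 1/b` and `𝔼[η log η] = 0` give
`𝔼[η ^ s] ≥ 1/b`, i.e. `ψ ≥ 0 = ψ(1)`. Writing `M(s) = 𝔼[η ^ s]`, one has
`log 𝔼[b^{1-t} W^{2t}] / (t log b) = 1 - 2ψ(β)/log b + ψ(2tβ)/(t log b)`, so the infimum over
`[1/2, 1]` is attained at `t = 1/(2β)`. Super-criticality `𝔼[W⁽²⁾ log W⁽²⁾] > log b` amounts to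
`M(2β) ψ(2β) < 2β 𝔼[η^{2β} log η]`, which is Gibbs' inequality `u - v ≤ u log (u/v)` for
`u = η^{2β}`, `v = b M(2β) η`; it is strict because the tangent inequality is strict on the
event `{η > 1}`, which forces `M(2β) > 1/b`.
-/

open MeasureTheory ProbabilityTheory Filter Topology
open scoped ENNReal NNReal

noncomputable section

namespace MCCM

variable {Ω : Type*} [MeasureSpace Ω]

open Real

theorem rpow_eq_mul_exp_sub_one_mul_log {x : ℝ} (hx : 0 < x) (s : ℝ) :
    x ^ s = x * exp ((s - 1) * log x) := by
  rw [rpow_def_of_pos hx, show log x * s = log x + (s - 1) * log x by ring, exp_add, exp_log hx]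

theorem add_sub_one_mul_mul_log_le_rpow {x s : ℝ} (hx : 0 ≤ x) (hs : 0 < s) :
    x + (s - 1) * (x * log x) ≤ x ^ s := by
  rcases hx.eq_or_lt with rfl | hx
  · simp [zero_rpow hs.ne']
  rw [rpow_eq_mul_exp_sub_one_mul_log hx]
  nlinarith [add_one_le_exp ((s - 1) * log x)]

theorem add_sub_one_mul_mul_log_lt_rpow {x s : ℝ} (hx : 1 < x) (hs : s ≠ 1) :
    x + (s - 1) * (x * log x) < x ^ s := by
  have hx0 : 0 < x := by linarith
  rw [rpow_eq_mul_exp_sub_one_mul_log hx0]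
  nlinarith [add_one_lt_exp (mul_ne_zero (sub_ne_zero.2 hs) (log_pos hx).ne')]

theorem sub_le_mul_log_sub_log {u v : ℝ} (hu : 0 < u) (hv : 0 < v) :
    u - v ≤ u * (log u - log v) := by
  have h := one_sub_inv_le_log_of_pos (div_pos hu hv)
  rw [inv_div, log_div hu.ne' hv.ne'] at h
  calc u - v = u * (1 - v / u) := by field_simp
    _ ≤ u * (log u - log v) := mul_le_mul_of_nonneg_left h hu.le

theorem abs_rpow_mul_log_le {x s : ℝ} (hx : 0 ≤ x) (hs : 0 < s) :
    |x ^ s * log x| ≤ 2 / s * (x ^ (2 * s) + x ^ (s / 2)) := by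
  rcases hx.eq_or_lt with rfl | hx
  · simp only [zero_rpow hs.ne', zero_mul, abs_zero]
    positivity
  have h2s : 0 ≤ x ^ (2 * s) := rpow_nonneg hx.le _
  have hs2 : 0 < x ^ (s / 2) := rpow_pos_of_pos hx _
  rcases le_total 1 x with h1 | h1
  · rw [abs_of_nonneg (mul_nonneg (rpow_nonneg hx.le s) (log_nonneg h1))]
    calc x ^ s * log x ≤ x ^ s * (x ^ s / s) :=
          mul_le_mul_of_nonneg_left (log_le_rpow_div hx.le hs) (rpow_nonneg hx.le s)
      _ = 1 / s * x ^ (2 * s) := by rw [two_mul, rpow_add hx]; ring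
      _ ≤ 2 / s * (x ^ (2 * s) + x ^ (s / 2)) := by
          rw [div_mul_eq_mul_div, div_mul_eq_mul_div]
          gcongr <;> linarith
  · have h := abs_log_mul_self_rpow_lt x (s / 2) hx h1 (by positivity)
    have hsplit : x ^ s = x ^ (s / 2) * x ^ (s / 2) := by rw [← rpow_add hx, add_halves]
    calc |x ^ s * log x| = x ^ (s / 2) * |log x * x ^ (s / 2)| := by
          rw [hsplit, abs_mul, abs_mul, abs_mul, abs_of_pos hs2]
          ring
      _ ≤ x ^ (s / 2) * (1 / (s / 2)) := mul_le_mul_of_nonneg_left h.le hs2.le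
      _ = 2 / s * x ^ (s / 2) := by field_simp
      _ ≤ 2 / s * (x ^ (2 * s) + x ^ (s / 2)) := by gcongr; linarith

theorem psiFun_eq_log_mul_integral (b : ℕ) (η : Ω → ℝ) (s : ℝ) :
    psiFun b η s = log (b * ∫ ω, η ω ^ s) := by
  rw [psiFun, integral_const_mul]

theorem rpow_div_mul_log_rpow_div {x p M : ℝ} (hx : 0 ≤ x) (hp : p ≠ 0) (hM : 0 < M) :
    x ^ p / M * log (x ^ p / M) = p / M * (x ^ p * log x) - log M / M * x ^ p := by
  rcases hx.eq_or_lt with rfl | hx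
  · simp [zero_rpow hp]
  rw [log_div (rpow_pos_of_pos hx p).ne' hM.ne', log_rpow hx]
  ring

theorem bkWeight_rpow {η : Ω → ℝ} (hη : ∀ ω, 0 ≤ η ω) (β p : ℝ) (ω : Ω) :
    bkWeight η β ω ^ p = η ω ^ (β * p) / (∫ ω', η ω' ^ β) ^ p := by
  rw [bkWeight, div_rpow (rpow_nonneg (hη ω) β) (integral_nonneg fun ω' => rpow_nonneg (hη ω') β),
    ← rpow_mul (hη ω)]

theorem sq_bkWeight {η : Ω → ℝ} (hη : ∀ ω, 0 ≤ η ω) (β : ℝ) (ω : Ω) :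
    bkWeight η β ω ^ 2 = η ω ^ (2 * β) / (∫ ω', η ω' ^ β) ^ 2 := by
  rw [← rpow_two, bkWeight_rpow hη, rpow_two, mul_comm]

namespace IsBoundaryEnv

variable {b : ℕ} {η : Ω → ℝ}

theorem one_lt_cast (henv : IsBoundaryEnv b η) : 1 < (b : ℝ) := by
  exact_mod_cast henv.two_le

theorem integrable (henv : IsBoundaryEnv b η) : Integrable η := by
  simpa using henv.mom 1 one_pos

theorem integrable_rpow_mul_log (henv : IsBoundaryEnv b η) {s : ℝ} (hs : 0 < s) :
    Integrable fun ω => η ω ^ s * log (η ω) := by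
  have hmeas : Measurable fun ω => η ω ^ s * log (η ω) :=
    (henv.meas.pow_const s).mul (measurable_log.comp henv.meas)
  refine (((henv.mom (2 * s) (by positivity)).add (henv.mom (s / 2) (by positivity))).const_mul
    (2 / s)).mono hmeas.aestronglyMeasurable (ae_of_all _ fun ω => ?_)
  rw [norm_eq_abs, norm_eq_abs]
  exact (abs_rpow_mul_log_le (henv.nonneg ω) hs).trans (le_abs_self _)

theorem integrable_mul_log (henv : IsBoundaryEnv b η) :
    Integrable fun ω => η ω * log (η ω) := by
  simpa using henv.integrable_rpow_mul_log one_pos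

theorem integrable_add_sub_one_mul_mul_log (henv : IsBoundaryEnv b η) (s : ℝ) :
    Integrable fun ω => η ω + (s - 1) * (η ω * log (η ω)) :=
  henv.integrable.add (henv.integrable_mul_log.const_mul (s - 1))

theorem integral_add_sub_one_mul_mul_log (henv : IsBoundaryEnv b η) (s : ℝ) :
    ∫ ω, (η ω + (s - 1) * (η ω * log (η ω))) = 1 / b := by
  rw [integral_add henv.integrable (henv.integrable_mul_log.const_mul _), integral_const_mul,
    henv.mean, henv.loglin, mul_zero, add_zero]

theorem one_div_le_integral_rpow (henv : IsBoundaryEnv b η) {s : ℝ} (hs : 0 < s) :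
    1 / (b : ℝ) ≤ ∫ ω, η ω ^ s := by
  rw [← henv.integral_add_sub_one_mul_mul_log s]
  exact integral_mono (henv.integrable_add_sub_one_mul_mul_log s) (henv.mom s hs)
    fun ω => add_sub_one_mul_mul_log_le_rpow (henv.nonneg ω) hs

theorem integral_rpow_pos (henv : IsBoundaryEnv b η) {s : ℝ} (hs : 0 < s) :
    0 < ∫ ω, η ω ^ s :=
  (one_div_pos.2 (zero_lt_one.trans henv.one_lt_cast)).trans_le (henv.one_div_le_integral_rpow hs)

theorem one_div_lt_integral_rpow (henv : IsBoundaryEnv b η) {s : ℝ} (hs : 0 < s) (hs1 : s ≠ 1) :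
    1 / (b : ℝ) < ∫ ω, η ω ^ s := by
  set g : Ω → ℝ := fun ω => η ω ^ s - (η ω + (s - 1) * (η ω * log (η ω)))
  have hg : Integrable g := (henv.mom s hs).sub (henv.integrable_add_sub_one_mul_mul_log s)
  have hg_nonneg : 0 ≤ g := fun ω =>
    sub_nonneg.2 (add_sub_one_mul_mul_log_le_rpow (henv.nonneg ω) hs)
  have hg_pos : 0 < ∫ ω, g ω := by
    rw [integral_pos_iff_support_of_nonneg hg_nonneg hg]
    exact henv.pos.trans_le (measure_mono fun ω hω =>
      (sub_pos.2 (add_sub_one_mul_mul_log_lt_rpow hω hs1)).ne')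
  rw [integral_sub (henv.mom s hs) (henv.integrable_add_sub_one_mul_mul_log s),
    henv.integral_add_sub_one_mul_mul_log s] at hg_pos
  linarith

theorem psiFun_eq_log_add_log (henv : IsBoundaryEnv b η) {s : ℝ} (hs : 0 < s) :
    psiFun b η s = log b + log (∫ ω, η ω ^ s) := by
  rw [psiFun_eq_log_mul_integral, log_mul (zero_lt_one.trans henv.one_lt_cast).ne'
    (henv.integral_rpow_pos hs).ne']

theorem psiFun_nonneg (henv : IsBoundaryEnv b η) {s : ℝ} (hs : 0 < s) : 0 ≤ psiFun b η s := by
  have hb : (0 : ℝ) < b := zero_lt_one.trans henv.one_lt_cast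
  rw [psiFun_eq_log_mul_integral]
  refine log_nonneg ?_
  simpa [hb.ne'] using mul_le_mul_of_nonneg_left (henv.one_div_le_integral_rpow hs) hb.le

theorem psiFun_one (henv : IsBoundaryEnv b η) : psiFun b η 1 = 0 := by
  have hb : (b : ℝ) ≠ 0 := (zero_lt_one.trans henv.one_lt_cast).ne'
  simp [psiFun_eq_log_mul_integral, henv.mean, hb]

/-- `ψ(s) < s ψ'(s)` for `s > 1`, written without derivatives. -/
theorem integral_rpow_mul_psiFun_lt (henv : IsBoundaryEnv b η) {s : ℝ} (hs : 1 < s) :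
    (∫ ω, η ω ^ s) * psiFun b η s < s * ∫ ω, η ω ^ s * log (η ω) := by
  have hs0 : 0 < s := by linarith
  have hb : (0 : ℝ) < b := zero_lt_one.trans henv.one_lt_cast
  set m := ∫ ω, η ω ^ s
  set E := ∫ ω, η ω ^ s * log (η ω)
  have hm : 1 / (b : ℝ) < m := henv.one_div_lt_integral_rpow hs0 hs.ne'
  have hm0 : 0 < m := henv.integral_rpow_pos hs0
  have hψ : 0 < psiFun b η s := by
    rw [psiFun_eq_log_mul_integral]
    refine log_pos ?_
    simpa [hb.ne'] using mul_lt_mul_of_pos_left hm hb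
  have hgibbs : ∀ ω, η ω ^ s - b * m * η ω
      ≤ (s - 1) * (η ω ^ s * log (η ω)) - psiFun b η s * η ω ^ s := by
    intro ω
    rcases (henv.nonneg ω).eq_or_lt with h | h
    · simp [← h, zero_rpow hs0.ne']
    calc η ω ^ s - b * m * η ω
        ≤ η ω ^ s * (log (η ω ^ s) - log (b * m * η ω)) :=
          sub_le_mul_log_sub_log (rpow_pos_of_pos h s) (by positivity)
      _ = (s - 1) * (η ω ^ s * log (η ω)) - psiFun b η s * η ω ^ s := by
          rw [log_rpow h, log_mul (by positivity) h.ne', psiFun_eq_log_mul_integral]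
          ring
  have hint : ∫ ω, (η ω ^ s - b * m * η ω)
      ≤ ∫ ω, ((s - 1) * (η ω ^ s * log (η ω)) - psiFun b η s * η ω ^ s) :=
    integral_mono ((henv.mom s hs0).sub (henv.integrable.const_mul _))
    (((henv.integrable_rpow_mul_log hs0).const_mul _).sub ((henv.mom s hs0).const_mul _)) hgibbs
  rw [integral_sub (henv.mom s hs0) (henv.integrable.const_mul _),
    integral_sub ((henv.integrable_rpow_mul_log hs0).const_mul _) ((henv.mom s hs0).const_mul _),
    integral_const_mul, integral_const_mul, integral_const_mul, henv.mean] at hint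
  change m - b * m * (1 / b) ≤ (s - 1) * E - psiFun b η s * m at hint
  rw [mul_one_div, mul_div_cancel_left₀ m hb.ne', sub_self] at hint
  have hE : 0 < E := by nlinarith
  nlinarith

theorem log_integral_bkWeight_div_eq (henv : IsBoundaryEnv b η) {β t : ℝ} (hβ : 0 < β)
    (ht : 0 < t) :
    log (∫ ω, (b : ℝ) ^ (1 - t) * bkWeight η β ω ^ (2 * t)) / (t * log b)
      = 1 - 2 * psiFun b η β / log b + psiFun b η (β * (2 * t)) / (t * log b) := by
  have hb : (0 : ℝ) < b := zero_lt_one.trans henv.one_lt_cast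
  have hlogb : 0 < log (b : ℝ) := log_pos henv.one_lt_cast
  have hA := henv.integral_rpow_pos hβ
  have hM := henv.integral_rpow_pos (by positivity : 0 < β * (2 * t))
  simp only [bkWeight_rpow henv.nonneg, mul_div_assoc', integral_div, integral_const_mul]
  rw [log_div (by positivity) (by positivity), log_mul (by positivity) hM.ne', log_rpow hb,
    log_rpow hA, henv.psiFun_eq_log_add_log hβ, henv.psiFun_eq_log_add_log (by positivity)]
  field_simp
  ring

theorem iInf_log_integral_bkWeight_div (henv : IsBoundaryEnv b η) {β : ℝ} (hβ1 : 1 / 2 < β)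
    (hβ2 : β < 1) :
    ⨅ t : Set.Icc (1 / 2 : ℝ) 1,
        log (∫ ω, (b : ℝ) ^ (1 - (t : ℝ)) * bkWeight η β ω ^ (2 * (t : ℝ))) / ((t : ℝ) * log b)
      = 1 - 2 * psiFun b η β / log b := by
  have hβ : 0 < β := by linarith
  have hlogb : 0 < log (b : ℝ) := log_pos henv.one_lt_cast
  have hlow : ∀ t : Set.Icc (1 / 2 : ℝ) 1, 1 - 2 * psiFun b η β / log b
      ≤ log (∫ ω, (b : ℝ) ^ (1 - (t : ℝ)) * bkWeight η β ω ^ (2 * (t : ℝ)))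
        / ((t : ℝ) * log b) := by
    rintro ⟨t, ht, -⟩
    have ht0 : 0 < t := by linarith
    rw [henv.log_integral_bkWeight_div_eq hβ ht0]
    have := div_nonneg (henv.psiFun_nonneg (by positivity : 0 < β * (2 * t)))
      (by positivity : 0 ≤ t * log b)
    linarith
  let t₀ : Set.Icc (1 / 2 : ℝ) 1 :=
    ⟨1 / (2 * β), by rw [le_div_iff₀ (by positivity)]; linarith,
      by rw [div_le_one (by positivity)]; linarith⟩
  have hmin : log (∫ ω, (b : ℝ) ^ (1 - (t₀ : ℝ)) * bkWeight η β ω ^ (2 * (t₀ : ℝ)))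
      / ((t₀ : ℝ) * log b) = 1 - 2 * psiFun b η β / log b := by
    rw [henv.log_integral_bkWeight_div_eq hβ (by positivity),
      show β * (2 * (1 / (2 * β))) = 1 by field_simp, henv.psiFun_one, zero_div, add_zero]
  have : Nonempty (Set.Icc (1 / 2 : ℝ) 1) := ⟨t₀⟩
  exact le_antisymm ((ciInf_le ⟨_, Set.forall_mem_range.2 hlow⟩ t₀).trans_eq hmin)
    (le_ciInf hlow)

theorem sq_bkWeight_div_eW2 (henv : IsBoundaryEnv b η) {β : ℝ} (hβ : 0 < β) (ω : Ω) :
    bkWeight η β ω ^ 2 / eW2 (bkWeight η β) = η ω ^ (2 * β) / ∫ ω', η ω' ^ (2 * β) := by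
  have hA := (henv.integral_rpow_pos hβ).ne'
  simp only [eW2, sq_bkWeight henv.nonneg, integral_div]
  field_simp

theorem sqLogMoment_bkWeight (henv : IsBoundaryEnv b η) {β : ℝ} (hβ : 0 < β) :
    sqLogMoment (bkWeight η β)
      = 2 * β * (∫ ω, η ω ^ (2 * β) * log (η ω)) / (∫ ω, η ω ^ (2 * β))
        - log (∫ ω, η ω ^ (2 * β)) := by
  have h2β : 0 < 2 * β := by positivity
  have hM := henv.integral_rpow_pos h2β
  simp only [sqLogMoment, henv.sq_bkWeight_div_eW2 hβ,
    rpow_div_mul_log_rpow_div (henv.nonneg _) h2β.ne' hM]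
  rw [integral_sub ((henv.integrable_rpow_mul_log h2β).const_mul _)
    ((henv.mom _ h2β).const_mul _), integral_const_mul, integral_const_mul]
  field_simp

theorem log_lt_sqLogMoment_bkWeight (henv : IsBoundaryEnv b η) {β : ℝ} (hβ : 1 / 2 < β) :
    log b < sqLogMoment (bkWeight η β) := by
  have h2β : 0 < 2 * β := by linarith
  have hM := henv.integral_rpow_pos h2β
  have key := henv.integral_rpow_mul_psiFun_lt (by linarith : 1 < 2 * β)
  rw [henv.psiFun_eq_log_add_log h2β] at key
  rw [henv.sqLogMoment_bkWeight (by linarith), lt_sub_iff_add_lt, lt_div_iff₀ hM]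
  linarith

end IsBoundaryEnv

theorem statement15_general {Ω : Type*} [MeasureSpace Ω]
    (b : ℕ) (η : Ω → ℝ) (henv : IsBoundaryEnv b η)
    (β : ℝ) (hβ1 : 1 / 2 < β) (hβ2 : β < 1)
    (W : Ω → ℝ) (hWdef : W = bkWeight η β) :
    (⨅ t : Set.Icc (1/2 : ℝ) 1,
        Real.log (∫ ω, (b : ℝ) ^ (1 - (t : ℝ)) * (W ω) ^ (2 * (t : ℝ))) / ((t : ℝ) * Real.log b))
      = 1 - 2 * psiFun b η β / Real.log b ∧
    DF b W = 2 * psiFun b η β / Real.log b := by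
  subst hWdef
  have hinf := henv.iInf_log_integral_bkWeight_div hβ1 hβ2
  refine ⟨hinf, ?_⟩
  rw [DF, if_neg (henv.log_lt_sqLogMoment_bkWeight hβ1).not_ge, hinf]
  ring

/-- For `1/2 < β < 1` and `W = η^β/𝔼[η^β]`, one has
`inf_{1/2 ≤ t ≤ 1} log 𝔼[b^{1−t} W^{2t}]/(t log b) = 1 − 2ψ(β)/log b`; consequently,
since such `W` is squared super-critical, `D_F(W,b) = 2ψ(β)/log b`. -/
theorem statement15 {Ω : Type*} [MeasureSpace Ω] [IsProbabilityMeasure (ℙ : Measure Ω)]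
    (b : ℕ) (η : Ω → ℝ) (henv : IsBoundaryEnv b η)
    (β : ℝ) (hβ1 : 1 / 2 < β) (hβ2 : β < 1)
    (W : Ω → ℝ) (hWdef : W = bkWeight η β) :
    (⨅ t : Set.Icc (1/2 : ℝ) 1,
        Real.log (∫ ω, (b : ℝ) ^ (1 - (t : ℝ)) * (W ω) ^ (2 * (t : ℝ))) / ((t : ℝ) * Real.log b))
      = 1 - 2 * psiFun b η β / Real.log b ∧
    DF b W = 2 * psiFun b η β / Real.log b :=
  statement15_general b η henv β hβ1 hβ2 W hWdef

end MCCM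
end
end

section
/- Let 0 < γ < 1 and let ν be a nonnegative finite Borel measure on [0,1] whose Fourier coefficients satisfy |ν̂(n)| = O(n^{−γ}) as ℕ ∋ n → ∞. Then ν is γ-upper Frostman regular. -/
open MeasureTheory ProbabilityTheory Filter Topology
open scoped ENNReal NNReal

noncomputable section

namespace MCCM

/-- A nonnegative Borel measure `ν` on `ℝ` is `γ`-upper Frostman regular:
`sup { ν(I)/|I|^γ : I a nondegenerate finite interval } < ∞`. -/
def UpperFrostman (γ : ℝ) (ν : Measure ℝ) : Prop :=
  ∃ C : ℝ, ∀ x y : ℝ, x < y → (ν (Set.Icc x y)).toReal ≤ C * (y - x) ^ γ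

/-!
Let `I = [x, y]` be short, with midpoint `m`, and let `S_N(t) = ∑_{k<N} e^{-2πik(t-m)}`
with `N ≈ 1 / (4|I|)`. On `I` all phases are at most `1` in absolute value, so `Re S_N ≥ N / 2`;
hence
`(N/2)² ν(I) ≤ ∫ |S_N|² dν = ∑_{k,l<N} e^{2πi(k-l)m} ν̂(k-l) ≤ N (ν(ℝ) + 2C ∑_{j≤N} j^{-γ})`,
and the last sum is at most `N^{1-γ} / (1-γ)`. Dividing by `N²` gives
`ν(I) = O(N^{-γ}) = O(|I|^γ)`; long intervals are controlled by the total mass.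
-/

open Finset Real

lemma sum_range_comp_sub_le {a : ℤ → ℝ} (ha : ∀ n, 0 ≤ a n) {k N : ℕ} (hk : k < N) :
    ∑ l ∈ range N, a (l - k) ≤ a 0 + ∑ j ∈ range N, (a (j + 1) + a (-(j + 1))) := by
  obtain ⟨n, rfl⟩ : ∃ n, N = k + (n + 1) := ⟨N - k - 1, by omega⟩
  have hlow : ∑ j ∈ range k, a ((k - 1 - j : ℕ) - k) = ∑ j ∈ range k, a (-(j + 1)) :=
    sum_congr rfl fun j hj => by
      have hjk := mem_range.mp hj
      rw [Nat.cast_sub (by omega), Nat.cast_sub (by omega)]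
      ring_nf
  have hsub : ∀ {m M : ℕ}, m ≤ M → ∀ f : ℕ → ℝ, (∀ j, 0 ≤ f j) →
      ∑ j ∈ range m, f j ≤ ∑ j ∈ range M, f j := fun hmM f hf =>
    sum_le_sum_of_subset_of_nonneg (range_subset_range.mpr hmM) fun j _ _ => hf j
  rw [← sum_range_add_sum_Ico _ (Nat.le_add_right k _), sum_Ico_eq_sum_range,
    ← sum_range_reflect, Nat.add_sub_cancel_left, sum_range_succ', hlow, sum_add_distrib]
  simp only [Nat.cast_add, add_sub_cancel_left, Nat.cast_one, Nat.cast_zero]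
  linarith [hsub (Nat.le_add_right k (n + 1)) (fun j => a (-(j + 1))) fun j => ha _,
    hsub (by omega : n ≤ k + (n + 1)) (fun j => a (j + 1)) fun j => ha _]

/-- Bernoulli's inequality applied to `(1 - 1 / x) ^ p`. -/
lemma rpow_sub_one_add_mul_rpow_le {p x : ℝ} (hp0 : 0 ≤ p) (hp1 : p ≤ 1) (hx : 1 ≤ x) :
    (x - 1) ^ p + p * x ^ (p - 1) ≤ x ^ p := by
  have hx0 : 0 < x := by linarith
  have hbern := rpow_one_add_le_one_add_mul_self (s := -x⁻¹)
    (by linarith [inv_le_one_of_one_le₀ hx]) hp0 hp1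
  have hfactor : x - 1 = x * (1 + -x⁻¹) := by field_simp; ring
  rw [hfactor, mul_rpow hx0.le (by linarith [inv_le_one_of_one_le₀ hx]), rpow_sub_one hx0.ne']
  calc x ^ p * (1 + -x⁻¹) ^ p + p * (x ^ p / x)
      ≤ x ^ p * (1 + p * -x⁻¹) + p * (x ^ p / x) := by gcongr
    _ = x ^ p := by field_simp; ring

lemma sum_range_rpow_neg_le {γ : ℝ} (hγ0 : 0 ≤ γ) (hγ1 : γ < 1) (N : ℕ) :
    ∑ j ∈ range N, ((j : ℝ) + 1) ^ (-γ) ≤ (N : ℝ) ^ (1 - γ) / (1 - γ) := by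
  have hp : 0 < 1 - γ := by linarith
  induction N with
  | zero => simp [zero_rpow hp.ne']
  | succ N ih =>
    have hstep := rpow_sub_one_add_mul_rpow_le (x := (N : ℝ) + 1) hp.le (by linarith)
      (by linarith [(N.cast_nonneg : (0 : ℝ) ≤ N)])
    rw [add_sub_cancel_right, sub_sub_cancel_left] at hstep
    rw [sum_range_succ, Nat.cast_succ, le_div_iff₀ hp]
    rw [le_div_iff₀ hp] at ih
    nlinarith

lemma norm_eker (ζ t : ℝ) : ‖eker ζ t‖ = 1 := Complex.norm_exp_ofReal_mul_I _

lemma eker_mul_eker (ζ ζ' t : ℝ) : eker ζ t * eker ζ' t = eker (ζ + ζ') t := by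
  simp only [eker, ← Complex.exp_add]
  congr 1
  push_cast
  ring

lemma eker_add (ζ t s : ℝ) : eker ζ (t + s) = eker ζ t * eker ζ s := by
  simp only [eker, ← Complex.exp_add]
  congr 1
  push_cast
  ring

lemma conj_eker (ζ t : ℝ) : starRingEnd ℂ (eker ζ t) = eker (-ζ) t := by
  rw [eker, eker, ← Complex.exp_conj, map_mul, Complex.conj_ofReal, Complex.conj_I]
  congr 1
  push_cast
  ring

lemma re_eker (ζ t : ℝ) : (eker ζ t).re = cos (2 * π * t * ζ) := by
  rw [eker, Complex.exp_ofReal_mul_I_re, cos_neg]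

lemma continuous_eker (ζ : ℝ) : Continuous (eker ζ) := by
  unfold eker
  fun_prop

section FourierTransform

variable (ν : Measure ℝ)

lemma ft_neg (ζ : ℝ) : ft ν (-ζ) = starRingEnd ℂ (ft ν ζ) := by
  simp only [ft, ← integral_conj, conj_eker]

lemma norm_ft_neg (ζ : ℝ) : ‖ft ν (-ζ)‖ = ‖ft ν ζ‖ := by
  rw [ft_neg, RCLike.norm_conj]

lemma norm_ft_zero : ‖ft ν 0‖ = ν.real Set.univ := by
  simp [ft, eker, integral_const]

lemma integral_eker_sub (ζ s : ℝ) : ∫ t, eker ζ (t - s) ∂ν = eker ζ (-s) * ft ν ζ := by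
  simp only [sub_eq_add_neg _ s, eker_add, ft, integral_mul_const, mul_comm]

lemma sum_sum_norm_ft_le {γ C : ℝ} (hγ0 : 0 ≤ γ) (hγ1 : γ < 1)
    (hdecay : ∀ n : ℕ, 1 ≤ n → ‖ft ν n‖ ≤ C * (n : ℝ) ^ (-γ)) (N : ℕ) :
    ∑ k ∈ range N, ∑ l ∈ range N, ‖ft ν ((k : ℝ) - l)‖ ≤
      N * (ν.real Set.univ + 2 * C * ((N : ℝ) ^ (1 - γ) / (1 - γ))) := by
  have hC : 0 ≤ C := by simpa using (norm_nonneg _).trans (hdecay 1 le_rfl)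
  have hpair : ∀ j : ℕ,
      ‖ft ν (-((j : ℤ) + 1 : ℤ))‖ + ‖ft ν (-(-((j : ℤ) + 1) : ℤ))‖ ≤
        2 * C * ((j : ℝ) + 1) ^ (-γ) := fun j => by
    have := hdecay (j + 1) (Nat.le_add_left 1 j)
    push_cast at this ⊢
    rw [neg_neg, norm_ft_neg]
    linarith
  have hrow : ∀ k ∈ range N, ∑ l ∈ range N, ‖ft ν ((k : ℝ) - l)‖ ≤
      ν.real Set.univ + 2 * C * ((N : ℝ) ^ (1 - γ) / (1 - γ)) := fun k hk => by
    have hsum := sum_range_comp_sub_le (a := fun n : ℤ => ‖ft ν (-n : ℤ)‖)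
      (fun _ => norm_nonneg _) (mem_range.mp hk)
    simp only [neg_zero, Int.cast_zero, norm_ft_zero, Int.cast_neg, Int.cast_sub,
      Int.cast_natCast, neg_sub] at hsum
    calc ∑ l ∈ range N, ‖ft ν ((k : ℝ) - l)‖
        ≤ ν.real Set.univ + ∑ j ∈ range N, 2 * C * ((j : ℝ) + 1) ^ (-γ) :=
          hsum.trans (by gcongr with j; simpa only [Int.cast_neg] using hpair j)
      _ ≤ ν.real Set.univ + 2 * C * ((N : ℝ) ^ (1 - γ) / (1 - γ)) := by
          rw [← mul_sum]
          gcongr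
          exact sum_range_rpow_neg_le hγ0 hγ1 N
  exact (sum_le_sum hrow).trans_eq (by rw [sum_const, card_range, nsmul_eq_mul])

end FourierTransform

def expSum (N : ℕ) (m t : ℝ) : ℂ := ∑ k ∈ range N, eker k (t - m)

lemma continuous_expSum (N : ℕ) (m : ℝ) : Continuous (expSum N m) :=
  continuous_finsetSum _ fun k _ => (continuous_eker k).comp (continuous_sub_right m)

lemma norm_expSum_le (N : ℕ) (m t : ℝ) : ‖expSum N m t‖ ≤ N :=
  (norm_sum_le _ _).trans (by simp [norm_eker])

lemma norm_sq_expSum (N : ℕ) (m t : ℝ) :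
    ((‖expSum N m t‖ ^ 2 : ℝ) : ℂ) =
      ∑ k ∈ range N, ∑ l ∈ range N, eker ((k : ℝ) - l) (t - m) := by
  rw [Complex.ofReal_pow, ← Complex.mul_conj', expSum, map_sum, sum_mul_sum]
  simp only [conj_eker, eker_mul_eker, sub_eq_add_neg]

lemma half_le_norm_expSum {N : ℕ} {m t : ℝ} (h : 2 * π * N * |t - m| ≤ 1) :
    (N : ℝ) / 2 ≤ ‖expSum N m t‖ := by
  have hcos : ∀ k ∈ range N, (1 : ℝ) / 2 ≤ cos (2 * π * (t - m) * k) := by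
    intro k hk
    have hkN : (k : ℝ) ≤ N := by exact_mod_cast (mem_range.mp hk).le
    have hθ : |2 * π * (t - m) * k| ≤ 1 := by
      rw [abs_mul, abs_mul, abs_of_pos two_pi_pos, Nat.abs_cast]
      calc 2 * π * |t - m| * k ≤ 2 * π * |t - m| * N := by gcongr
        _ ≤ 1 := by linarith
    nlinarith [one_sub_sq_div_two_le_cos (x := 2 * π * (t - m) * k), sq_abs (2 * π * (t - m) * k),
      abs_nonneg (2 * π * (t - m) * k)]
  calc (N : ℝ) / 2 = ∑ _k ∈ range N, (1 : ℝ) / 2 := by simp [div_eq_mul_inv]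
    _ ≤ ∑ k ∈ range N, cos (2 * π * (t - m) * k) := sum_le_sum hcos
    _ = (expSum N m t).re := by simp [expSum, Complex.re_sum, re_eker]
    _ ≤ ‖expSum N m t‖ := Complex.re_le_norm _

section Energy

variable (ν : Measure ℝ) [IsFiniteMeasure ν]

lemma integral_norm_sq_expSum_le (N : ℕ) (m : ℝ) :
    ∫ t, ‖expSum N m t‖ ^ 2 ∂ν ≤
      ∑ k ∈ range N, ∑ l ∈ range N, ‖ft ν ((k : ℝ) - l)‖ := by
  have hint : ∀ ζ : ℝ, Integrable (fun t => eker ζ (t - m)) ν := fun ζ =>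
    .of_bound ((continuous_eker ζ).comp (continuous_sub_right m)).aestronglyMeasurable 1
      (.of_forall fun t => (norm_eker ζ _).le)
  have hexpand : ∫ t, ((‖expSum N m t‖ ^ 2 : ℝ) : ℂ) ∂ν =
      ∑ k ∈ range N, ∑ l ∈ range N, eker ((k : ℝ) - l) (-m) * ft ν ((k : ℝ) - l) := by
    simp only [norm_sq_expSum]
    rw [integral_finsetSum _ fun k _ => integrable_finsetSum _ fun l _ => hint _]
    refine sum_congr rfl fun k _ => ?_
    rw [integral_finsetSum _ fun l _ => hint _]
    simp only [integral_eker_sub]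
  calc ∫ t, ‖expSum N m t‖ ^ 2 ∂ν
        = ‖∫ t, ((‖expSum N m t‖ ^ 2 : ℝ) : ℂ) ∂ν‖ := by
        rw [integral_complex_ofReal, Complex.norm_real, Real.norm_of_nonneg
          (integral_nonneg fun t => sq_nonneg _)]
    _ ≤ ∑ k ∈ range N, ∑ l ∈ range N,
          ‖eker ((k : ℝ) - l) (-m) * ft ν ((k : ℝ) - l)‖ := by
        rw [hexpand]
        exact (norm_sum_le _ _).trans (sum_le_sum fun k _ => norm_sum_le _ _)
    _ = ∑ k ∈ range N, ∑ l ∈ range N, ‖ft ν ((k : ℝ) - l)‖ := by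
        simp only [norm_mul, norm_eker, one_mul]

lemma sq_mul_measureReal_Icc_le {N : ℕ} {x y : ℝ} (h : π * N * (y - x) ≤ 1) :
    ((N : ℝ) / 2) ^ 2 * ν.real (Set.Icc x y) ≤
      ∫ t, ‖expSum N ((x + y) / 2) t‖ ^ 2 ∂ν := by
  have hint : Integrable (fun t => ‖expSum N ((x + y) / 2) t‖ ^ 2) ν :=
    .of_bound ((continuous_expSum N _).norm.pow 2).aestronglyMeasurable ((N : ℝ) ^ 2)
      (.of_forall fun t => by
        rw [norm_pow, norm_norm]
        exact pow_le_pow_left₀ (norm_nonneg _) (norm_expSum_le N _ t) 2)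
  refine le_trans ?_ (mul_meas_ge_le_integral_of_nonneg (.of_forall fun t => sq_nonneg _) hint
    (((N : ℝ) / 2) ^ 2))
  refine mul_le_mul_of_nonneg_left (measureReal_mono fun t ht => ?_) (sq_nonneg _)
  have hdist : 2 * |t - (x + y) / 2| ≤ y - x := by
    rw [← abs_two, ← abs_mul, abs_le]
    constructor <;> linarith [ht.1, ht.2]
  have hN : 2 * π * N * |t - (x + y) / 2| ≤ 1 := by
    calc 2 * π * N * |t - (x + y) / 2| = π * N * (2 * |t - (x + y) / 2|) := by ring
      _ ≤ π * N * (y - x) := by gcongr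
      _ ≤ 1 := h
  exact pow_le_pow_left₀ (by positivity) (half_le_norm_expSum hN) 2

end Energy

section Frostman

variable {ν : Measure ℝ} [IsFiniteMeasure ν] {γ C : ℝ}

lemma measureReal_Icc_le_of_pi_mul_le (hγ0 : 0 ≤ γ) (hγ1 : γ < 1)
    (hdecay : ∀ n : ℕ, 1 ≤ n → ‖ft ν n‖ ≤ C * (n : ℝ) ^ (-γ))
    {N : ℕ} (hN : 0 < N) {x y : ℝ} (h : π * N * (y - x) ≤ 1) :
    ν.real (Set.Icc x y) ≤
      4 * ν.real Set.univ * (N : ℝ)⁻¹ + 8 * C / (1 - γ) * (N : ℝ) ^ (-γ) := by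
  have hN0 : (0 : ℝ) < N := by exact_mod_cast hN
  have key := (sq_mul_measureReal_Icc_le ν h).trans <|
    (integral_norm_sq_expSum_le ν N _).trans (sum_sum_norm_ft_le ν hγ0 hγ1 hdecay N)
  have hrpow : (N : ℝ) ^ (1 - γ) = N * (N : ℝ) ^ (-γ) := by
    rw [sub_eq_add_neg, rpow_add hN0, rpow_one]
  refine le_of_mul_le_mul_left (key.trans_eq ?_) (by positivity : (0 : ℝ) < ((N : ℝ) / 2) ^ 2)
  rw [hrpow]
  field_simp
  ring

lemma exists_nat_pi_mul_le {δ : ℝ} (hδ0 : 0 < δ) (hδ : δ ≤ 1 / 8) :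
    ∃ N : ℕ, 0 < N ∧ (N : ℝ)⁻¹ ≤ 8 * δ ∧ π * N * δ ≤ 1 := by
  have hfloor := Nat.floor_le (by positivity : 0 ≤ 1 / (4 * δ))
  have hhalf : 1 / (8 * δ) ≤ ⌊1 / (4 * δ)⌋₊ := by
    have h8 : 1 ≤ 1 / (8 * δ) := by rw [le_div_iff₀ (by positivity)]; linarith
    have h48 : 1 / (4 * δ) = 2 * (1 / (8 * δ)) := by field_simp; norm_num
    linarith [Nat.lt_floor_add_one (1 / (4 * δ))]
  have hpos : (0 : ℝ) < ⌊1 / (4 * δ)⌋₊ := lt_of_lt_of_le (by positivity) hhalf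
  refine ⟨⌊1 / (4 * δ)⌋₊, by exact_mod_cast hpos, ?_, ?_⟩
  · rw [inv_le_comm₀ hpos (by positivity), ← one_div]
    exact hhalf
  · calc π * ⌊1 / (4 * δ)⌋₊ * δ ≤ 4 * (1 / (4 * δ)) * δ := by gcongr; exact pi_le_four
      _ = 1 := by field_simp

lemma measureReal_Icc_le_rpow (hγ0 : 0 ≤ γ) (hγ1 : γ < 1)
    (hdecay : ∀ n : ℕ, 1 ≤ n → ‖ft ν n‖ ≤ C * (n : ℝ) ^ (-γ))
    {x y : ℝ} (hxy : x < y) (hδ : y - x ≤ 1 / 8) :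
    ν.real (Set.Icc x y) ≤ (32 * ν.real Set.univ + 64 * C / (1 - γ)) * (y - x) ^ γ := by
  have hδ0 : 0 < y - x := sub_pos.mpr hxy
  have hC : 0 ≤ C := by simpa using (norm_nonneg _).trans (hdecay 1 le_rfl)
  obtain ⟨N, hN, hinv, hπ⟩ := exists_nat_pi_mul_le hδ0 hδ
  have hinv' : (N : ℝ)⁻¹ ≤ 8 * (y - x) ^ γ :=
    hinv.trans (by gcongr; exact self_le_rpow_of_le_one hδ0.le (by linarith) hγ1.le)
  have hpow : (N : ℝ) ^ (-γ) ≤ 8 * (y - x) ^ γ := by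
    calc (N : ℝ) ^ (-γ) = (N : ℝ)⁻¹ ^ γ := by
          rw [rpow_neg N.cast_nonneg, inv_rpow N.cast_nonneg]
      _ ≤ (8 * (y - x)) ^ γ := by gcongr
      _ = 8 ^ γ * (y - x) ^ γ := mul_rpow (by norm_num) hδ0.le
      _ ≤ 8 * (y - x) ^ γ := by
        gcongr
        exact rpow_le_self_of_one_le (by norm_num) hγ1.le
  calc ν.real (Set.Icc x y)
      ≤ 4 * ν.real Set.univ * (N : ℝ)⁻¹ + 8 * C / (1 - γ) * (N : ℝ) ^ (-γ) :=
        measureReal_Icc_le_of_pi_mul_le hγ0 hγ1 hdecay hN hπ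
    _ ≤ 4 * ν.real Set.univ * (8 * (y - x) ^ γ) + 8 * C / (1 - γ) * (8 * (y - x) ^ γ) := by
        gcongr
    _ = (32 * ν.real Set.univ + 64 * C / (1 - γ)) * (y - x) ^ γ := by ring

end Frostman

/-- On long intervals the total mass already gives a Frostman bound. -/
lemma UpperFrostman.of_forall_sub_le {γ r K : ℝ} {ν : Measure ℝ} [IsFiniteMeasure ν]
    (hγ0 : 0 ≤ γ) (hγ1 : γ ≤ 1) (hr0 : 0 < r) (hr1 : r ≤ 1)
    (h : ∀ x y : ℝ, x < y → y - x ≤ r → ν.real (Set.Icc x y) ≤ K * (y - x) ^ γ) :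
    UpperFrostman γ ν := by
  refine ⟨max K (ν.real Set.univ / r), fun x y hxy => ?_⟩
  rcases le_or_gt (y - x) r with hshort | hlong
  · exact (h x y hxy hshort).trans (by gcongr; exact le_max_left _ _)
  · have hr : r ≤ (y - x) ^ γ := by
      rcases le_or_gt (y - x) 1 with h1 | h1
      · exact hlong.le.trans (self_le_rpow_of_le_one (by linarith) h1 hγ1)
      · exact hr1.trans (one_le_rpow h1.le hγ0)
    calc (ν (Set.Icc x y)).toReal ≤ ν.real Set.univ := measureReal_mono (Set.subset_univ _)
      _ = ν.real Set.univ / r * r := by field_simp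
      _ ≤ max K (ν.real Set.univ / r) * (y - x) ^ γ := by
        gcongr
        exact le_max_right _ _

theorem statement18_general (γ : ℝ) (hγ0 : 0 < γ) (hγ1 : γ < 1)
    (ν : Measure ℝ) [IsFiniteMeasure ν]
    (C : ℝ) (hdecay : ∀ n : ℕ, 1 ≤ n → ‖ft ν (n : ℝ)‖ ≤ C * (n : ℝ) ^ (-γ)) :
    UpperFrostman γ ν :=
  UpperFrostman.of_forall_sub_le hγ0.le hγ1.le (by norm_num : (0 : ℝ) < 1 / 8) (by norm_num)
    fun _ _ hxy hδ => measureReal_Icc_le_rpow hγ0.le hγ1 hdecay hxy hδ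

/-- Let `0 < γ < 1` and let `ν` be a nonnegative finite Borel measure on
`[0,1]` with `|ν̂(n)| = O(n^{−γ})` as `ℕ ∋ n → ∞`.  Then `ν` is `γ`-upper Frostman regular. -/
theorem statement18 (γ : ℝ) (hγ0 : 0 < γ) (hγ1 : γ < 1)
    (ν : Measure ℝ) [IsFiniteMeasure ν] (hsupp : ν (Set.Icc (0 : ℝ) 1)ᶜ = 0)
    (C : ℝ) (hdecay : ∀ n : ℕ, 1 ≤ n → ‖ft ν (n : ℝ)‖ ≤ C * (n : ℝ) ^ (-γ)) :
    UpperFrostman γ ν :=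
  statement18_general γ hγ0 hγ1 ν C hdecay

end MCCM
end
end
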